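/- arXiv:0705.3629 — 9 statements merged into one kernel-verified Lean document; each statement's English description precedes it below -/
import Mathlib

section
/- Let f : ℝ → ℝ be a convex function and n a positive integer. Then the map A ↦ Tr f(A) is convex on the real vector space of n×n Hermitian complex matrices: for all Hermitian A, B and all θ ∈ [0,1], Tr f(θA + (1−θ)B) ≤ θ · Tr f(A) + (1−θ) · Tr f(B). -/
/-!
Peierls' inequality: in any orthonormal basis, the diagonal of a Hermitian matrix `A` is the
image of its eigenvalue vector under the doubly stochastic matrix `(|Vᵢⱼ|²)` of the unitary
change of basis `V`, so Jensen's inequality gives `∑ᵢ f(Aᵢᵢ) ≤ ∑ᵢ f(λᵢ(A))` for convex `f`.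
Written in an eigenbasis of `C = θA + (1-θ)B`, the eigenvalues of `C` are its diagonal entries,
which depend affinely on `A` and `B`; convexity of `f` entrywise followed by Peierls'
inequality for `A` and `B` in that same basis gives the claim.
-/

/-- `f` applied to a Hermitian matrix through a spectral decomposition
(continuous functional calculus): `f(A) = U · diag(f(λᵢ)) · U*`. -/
noncomputable def IsHermitian.applyFun {n : ℕ} {A : Matrix (Fin n) (Fin n) ℂ}
    (hA : A.IsHermitian) (f : ℝ → ℝ) : Matrix (Fin n) (Fin n) ℂ :=
  (hA.eigenvectorUnitary : Matrix (Fin n) (Fin n) ℂ) *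
    Matrix.diagonal (fun i => (f (hA.eigenvalues i) : ℂ)) *
    star (hA.eigenvectorUnitary : Matrix (Fin n) (Fin n) ℂ)

open Finset Matrix

theorem ConvexOn.sum_map_mulVec_le {𝕜 β ι : Type*} [Field 𝕜] [LinearOrder 𝕜]
    [IsStrictOrderedRing 𝕜] [AddCommGroup β] [PartialOrder β] [IsOrderedAddMonoid β]
    [Module 𝕜 β] [IsStrictOrderedModule 𝕜 β] [Fintype ι] [DecidableEq ι]
    {s : Set 𝕜} {f : 𝕜 → β} (hf : ConvexOn 𝕜 s f) {M : Matrix ι ι 𝕜}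
    (hM : M ∈ doublyStochastic 𝕜 ι) {x : ι → 𝕜} (hx : ∀ i, x i ∈ s) :
    ∑ i, f ((M *ᵥ x) i) ≤ ∑ i, f (x i) :=
  calc ∑ i, f ((M *ᵥ x) i)
      ≤ ∑ i, ∑ j, M i j • f (x j) :=
        sum_le_sum fun i _ => hf.map_sum_le (fun j _ => nonneg_of_mem_doublyStochastic hM)
          (sum_row_of_mem_doublyStochastic hM i) (fun j _ => hx j)
    _ = ∑ j, f (x j) := by
        rw [sum_comm]
        simp only [← sum_smul, sum_col_of_mem_doublyStochastic hM, one_smul]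

namespace Matrix

variable {𝕜 n : Type*} [RCLike 𝕜] [Fintype n] [DecidableEq n]

theorem of_norm_sq_mem_doublyStochastic_of_mem_unitaryGroup {U : Matrix n n 𝕜}
    (hU : U ∈ unitaryGroup n 𝕜) : of (fun i j => ‖U i j‖ ^ 2) ∈ doublyStochastic ℝ n := by
  refine mem_doublyStochastic_iff_sum.2 ⟨fun i j => sq_nonneg _, fun i => ?_, fun j => ?_⟩
  · have h := congr_fun₂ (mem_unitaryGroup_iff.1 hU) i i
    simp only [mul_apply, star_apply, RCLike.star_def, RCLike.mul_conj, one_apply_eq] at h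
    exact_mod_cast h
  · have h := congr_fun₂ (mem_unitaryGroup_iff'.1 hU) j j
    simp only [mul_apply, star_apply, RCLike.star_def, RCLike.conj_mul, one_apply_eq] at h
    exact_mod_cast h

theorem re_mul_diagonal_mul_star_apply_self (V : Matrix n n 𝕜) (d : n → ℝ) (i : n) :
    RCLike.re ((V * diagonal (fun j => (d j : 𝕜)) * star V) i i) =
      (of (fun i j => ‖V i j‖ ^ 2) *ᵥ d) i := by
  rw [mul_apply]
  simp only [mul_diagonal, star_apply, RCLike.star_def, mulVec, dotProduct, of_apply, map_sum]
  refine sum_congr rfl fun j _ => ?_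
  rw [mul_right_comm, RCLike.mul_conj]
  norm_cast

namespace IsHermitian

variable {A : Matrix n n 𝕜}

theorem eigenvalues_eq_re_star_mul_mul_eigenvectorUnitary_apply (hA : A.IsHermitian) (i : n) :
    hA.eigenvalues i = RCLike.re ((star (hA.eigenvectorUnitary : Matrix n n 𝕜) * A *
      hA.eigenvectorUnitary) i i) := by
  have h := hA.conjStarAlgAut_star_eigenvectorUnitary
  rw [Unitary.conjStarAlgAut_star_apply] at h
  simp [h]

theorem star_mul_mul_eq_mul_diagonal_mul_star (hA : A.IsHermitian) (U : Matrix n n 𝕜) :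
    star U * A * U = (star U * hA.eigenvectorUnitary) *
      diagonal (fun j => (hA.eigenvalues j : 𝕜)) * star (star U * hA.eigenvectorUnitary) := by
  conv_lhs => rw [hA.spectral_theorem, Unitary.conjStarAlgAut_apply]
  simp only [star_mul, star_star, mul_assoc]
  rfl

end IsHermitian

end Matrix

theorem ConvexOn.sum_map_re_diag_conj_le_sum_map_eigenvalues {𝕜 n β : Type*} [RCLike 𝕜]
    [Fintype n] [DecidableEq n] [AddCommGroup β] [PartialOrder β] [IsOrderedAddMonoid β]
    [Module ℝ β] [IsStrictOrderedModule ℝ β] {s : Set ℝ} {f : ℝ → β} (hf : ConvexOn ℝ s f)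
    {A : Matrix n n 𝕜} (hA : A.IsHermitian) (hs : ∀ i, hA.eigenvalues i ∈ s)
    {U : Matrix n n 𝕜} (hU : U ∈ unitaryGroup n 𝕜) :
    ∑ i, f (RCLike.re ((star U * A * U) i i)) ≤ ∑ i, f (hA.eigenvalues i) := by
  have hV : star U * hA.eigenvectorUnitary ∈ unitaryGroup n 𝕜 :=
    mul_mem (Unitary.star_mem hU) hA.eigenvectorUnitary.2
  simpa only [hA.star_mul_mul_eq_mul_diagonal_mul_star, re_mul_diagonal_mul_star_apply_self] using
    hf.sum_map_mulVec_le (of_norm_sq_mem_doublyStochastic_of_mem_unitaryGroup hV) hs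

/-- Convexity of `A ↦ Tr f(A)` on Hermitian matrices, where
`Tr f(A) = ∑ᵢ f(λᵢ(A))`. -/
theorem trace_apply_convex {n : ℕ} (f : ℝ → ℝ) (hf : ConvexOn ℝ Set.univ f)
    (A B : Matrix (Fin n) (Fin n) ℂ) (hA : A.IsHermitian) (hB : B.IsHermitian)
    (θ : ℝ) (hθ0 : 0 ≤ θ) (hθ1 : θ ≤ 1)
    (hC : (θ • A + (1 - θ) • B).IsHermitian) :
    ∑ i, f (hC.eigenvalues i) ≤
      θ * ∑ i, f (hA.eigenvalues i) + (1 - θ) * ∑ i, f (hB.eigenvalues i) := by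
  set U : Matrix (Fin n) (Fin n) ℂ := (hC.eigenvectorUnitary : Matrix (Fin n) (Fin n) ℂ)
  have hU : U ∈ unitaryGroup (Fin n) ℂ := hC.eigenvectorUnitary.2
  let a i := ((star U * A * U) i i).re
  let b i := ((star U * B * U) i i).re
  have hsplit : ∀ i, hC.eigenvalues i = θ * a i + (1 - θ) * b i := fun i => by
    simp [hC.eigenvalues_eq_re_star_mul_mul_eigenvectorUnitary_apply, U, a, b, mul_add, add_mul]
  calc ∑ i, f (hC.eigenvalues i)
      ≤ ∑ i, (θ * f (a i) + (1 - θ) * f (b i)) :=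
        sum_le_sum fun i _ => hsplit i ▸ hf.2 trivial trivial hθ0 (by linarith) (by ring)
    _ = θ * ∑ i, f (a i) + (1 - θ) * ∑ i, f (b i) := by
        rw [sum_add_distrib, mul_sum, mul_sum]
    _ ≤ θ * ∑ i, f (hA.eigenvalues i) + (1 - θ) * ∑ i, f (hB.eigenvalues i) := by
        gcongr θ * ?_ + (1 - θ) * ?_
        · exact hf.sum_map_re_diag_conj_le_sum_map_eigenvalues hA (fun _ => trivial) hU
        · exact hf.sum_map_re_diag_conj_le_sum_map_eigenvalues hB (fun _ => trivial) hU
end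

section
/- Let 𝒜 be a complex unital Banach algebra, let B, X ∈ 𝒜, and let t ∈ ℝ. Then the map α ↦ exp(it(B+αX)) from ℝ to 𝒜 is differentiable, and for every α ∈ ℝ its derivative equals i·∫₀ᵗ exp(is(B+αX)) · X · exp(i(t−s)(B+αX)) ds (a Bochner integral of a continuous 𝒜-valued function). -/
/-!
Differentiating `s ↦ exp (s • (A + E)) * exp ((t - s) • A)` gives Duhamel's formula
`exp (t • (A + E)) - exp (t • A) = ∫₀ᵗ exp (s • (A + E)) * E * exp ((t - s) • A) ds`.
With `E = (a - α) • X` it writes the increment of `a ↦ exp (t • (M + (a - α) • X))` as `a - α`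
times an integral depending continuously on `a`, whose value at `a = α` is thus the derivative.
Real scalars suffice, since `(i * t) • (B + a • X) = t • (i • B + a • i • X)`.
-/

open NormedSpace

theorem hasDerivAt_of_eq_add_sub_smul {𝕜 F : Type*} [NontriviallyNormedField 𝕜]
    [NormedAddCommGroup F] [NormedSpace 𝕜 F] {f g : 𝕜 → F} {x : 𝕜}
    (hfg : ∀ y, f y = f x + (y - x) • g y) (hg : ContinuousAt g x) :
    HasDerivAt f (g x) x := by
  rw [hasDerivAt_iff_tendsto_slope]
  refine (hg.tendsto.mono_left nhdsWithin_le_nhds).congr' ?_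
  filter_upwards [self_mem_nhdsWithin] with y (hy : y ≠ x)
  rw [slope_def_module, hfg y, add_sub_cancel_left, smul_smul,
    inv_mul_cancel₀ (sub_ne_zero.2 hy), one_smul]

section RealAlgebra

variable {𝔸 : Type*} [NormedRing 𝔸] [NormedAlgebra ℝ 𝔸] [CompleteSpace 𝔸]

@[fun_prop]
theorem continuous_exp_of_real : Continuous (exp : 𝔸 → 𝔸) := by
  let +nondep : NormedAlgebra ℚ 𝔸 := .restrictScalars ℚ ℝ 𝔸
  exact exp_continuous

theorem exp_smul_add_sub_exp_smul_eq_integral (A E : 𝔸) (t : ℝ) :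
    exp (t • (A + E)) - exp (t • A) =
      ∫ s in (0 : ℝ)..t, exp (s • (A + E)) * E * exp ((t - s) • A) := by
  have hderiv : ∀ s ∈ Set.uIcc 0 t,
      HasDerivAt (fun s : ℝ => exp (s • (A + E)) * exp ((t - s) • A))
        (exp (s • (A + E)) * E * exp ((t - s) • A)) s := by
    intro s _
    have hleft := hasDerivAt_exp_smul_const (A + E) s
    have hright :=
      (hasDerivAt_exp_smul_const' A (t - s)).scomp s ((hasDerivAt_id s).const_sub t)
    refine (hleft.mul hright).congr_deriv ?_
    simp only [Function.comp_apply, neg_one_smul, mul_neg]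
    noncomm_ring
  rw [intervalIntegral.integral_eq_sub_of_hasDerivAt hderiv
    ((by fun_prop : Continuous _).intervalIntegrable _ _)]
  simp

theorem hasDerivAt_exp_smul_add_smul (A E : 𝔸) (t α : ℝ) :
    HasDerivAt (fun a : ℝ => exp (t • (A + a • E)))
      (∫ s in (0 : ℝ)..t, exp (s • (A + α • E)) * E * exp ((t - s) • (A + α • E))) α := by
  set M := A + α • E
  have hshift : ∀ a : ℝ, A + a • E = M + (a - α) • E := fun a => by
    simp only [M, sub_smul]; abel
  refine hasDerivAt_of_eq_add_sub_smul
    (g := fun a => ∫ s in (0 : ℝ)..t, exp (s • (M + (a - α) • E)) * E * exp ((t - s) • M))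
    (fun a => ?_)
    (intervalIntegral.continuous_parametric_intervalIntegral_of_continuous'
      (by fun_prop) _ _).continuousAt |>.congr_deriv (by simp)
  simp only [hshift, sub_self, zero_smul, add_zero]
  rw [eq_add_of_sub_eq' (exp_smul_add_sub_exp_smul_eq_integral M ((a - α) • E) t),
    ← intervalIntegral.integral_smul]
  simp only [mul_smul_comm, smul_mul_assoc]

end RealAlgebra

/-- For `B, X` in a complex unital Banach algebra and `t ∈ ℝ`, the map
`α ↦ exp(it(B+αX))` is differentiable on `ℝ` with derivative
`i·∫₀ᵗ exp(is(B+αX)) X exp(i(t−s)(B+αX)) ds` at every `α`. -/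
theorem hasDerivAt_exp_interpolation {𝒜 : Type*} [NormedRing 𝒜] [NormedAlgebra ℂ 𝒜]
    [CompleteSpace 𝒜] (B X : 𝒜) (t : ℝ) :
    ∀ α : ℝ,
      HasDerivAt
        (fun a : ℝ => NormedSpace.exp ((Complex.I * (t : ℂ)) • (B + (a : ℂ) • X)))
        (Complex.I •
          ∫ s in (0:ℝ)..t,
            NormedSpace.exp ((Complex.I * (s : ℂ)) • (B + (α : ℂ) • X)) * X *
              NormedSpace.exp ((Complex.I * ((t : ℂ) - (s : ℂ))) • (B + (α : ℂ) • X)))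
        α := by
  intro α
  have hsmul : ∀ r a : ℝ,
      (Complex.I * (r : ℂ)) • (B + (a : ℂ) • X) = r • (Complex.I • B + a • Complex.I • X) := by
    intro r a
    rw [mul_comm, ← smul_smul, Complex.coe_smul, Complex.coe_smul, smul_add, smul_comm]
  convert hasDerivAt_exp_smul_add_smul (Complex.I • B) (Complex.I • X) t α using 1
  · simp only [hsmul]
  · rw [← intervalIntegral.integral_smul]
    congr 1 with s
    rw [← Complex.ofReal_sub, hsmul, hsmul, mul_smul_comm, smul_mul_assoc]
end

section
/- (Birman–Solomyak bound, finite-dimensional case.) Let A, B be n×n Hermitian complex matrices, let [a,b] be an interval containing all eigenvalues of A and of B, and let f : ℝ → ℝ satisfy |f(s) − f(t)| ≤ L·|s − t| for all s, t ∈ [a,b]. Then ‖f(A) − f(B)‖_F ≤ L · ‖A − B‖_F. -/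
/-- The Frobenius (Hilbert–Schmidt) norm of a complex matrix. -/
noncomputable def frobeniusNorm {n : ℕ} (X : Matrix (Fin n) (Fin n) ℂ) : ℝ :=
  Real.sqrt (∑ i, ∑ j, ‖X i j‖ ^ 2)

/-!
Conjugating by the eigenvector unitaries `U` of `A` and `V` of `B` preserves the Frobenius norm.
It turns `f(A) − f(B)` into the matrix with entries `(f(λᵢ) − f(μⱼ)) · (U*V)ᵢⱼ` and `A − B` into
the one with entries `(λᵢ − μⱼ) · (U*V)ᵢⱼ`, so the Lipschitz bound on `f` compares the two
entry by entry.
-/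

open Matrix

theorem Matrix.sum_sum_norm_sq_eq_re_trace {m n 𝕜 : Type*} [Fintype m] [Fintype n] [RCLike 𝕜]
    (M : Matrix m n 𝕜) : ∑ i, ∑ j, ‖M i j‖ ^ 2 = RCLike.re (Mᴴ * M).trace := by
  simp only [trace, diag, mul_apply, conjTranspose_apply, map_sum, RCLike.star_def,
    RCLike.conj_mul, ← RCLike.ofReal_pow, RCLike.ofReal_re]
  exact Finset.sum_comm

theorem frobeniusNorm_star_mul_mul_of_mem_unitaryGroup {n : ℕ} {U V : Matrix (Fin n) (Fin n) ℂ}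
    (hU : U ∈ unitaryGroup (Fin n) ℂ) (hV : V ∈ unitaryGroup (Fin n) ℂ)
    (X : Matrix (Fin n) (Fin n) ℂ) : frobeniusNorm (star U * X * V) = frobeniusNorm X := by
  have hconj : (star U * X * V)ᴴ * (star U * X * V) = star V * (Xᴴ * X) * V := by
    simp only [← star_eq_conjTranspose, star_mul, star_star, Matrix.mul_assoc]
    rw [← Matrix.mul_assoc U, Unitary.mul_star_self_of_mem hU, Matrix.one_mul]
  rw [frobeniusNorm, frobeniusNorm, sum_sum_norm_sq_eq_re_trace, sum_sum_norm_sq_eq_re_trace,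
    hconj, trace_mul_cycle, Unitary.mul_star_self_of_mem hV, Matrix.one_mul]

theorem frobeniusNorm_le_mul_of_forall_norm_le {n : ℕ} {X Y : Matrix (Fin n) (Fin n) ℂ} {L : ℝ}
    (h : ∀ i j, ‖X i j‖ ≤ L * ‖Y i j‖) : frobeniusNorm X ≤ L * frobeniusNorm Y := by
  rcases le_or_gt 0 L with hL | hL
  · calc frobeniusNorm X ≤ √(∑ i, ∑ j, (L * ‖Y i j‖) ^ 2) := by
          unfold frobeniusNorm
          gcongr with i _ j _
          exact h i j
      _ = L * frobeniusNorm Y := by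
          simp only [mul_pow, ← Finset.mul_sum]
          rw [frobeniusNorm, Real.sqrt_mul (sq_nonneg L), Real.sqrt_sq hL]
  · have hY : Y = 0 := Matrix.ext fun i j =>
      norm_le_zero_iff.mp (nonpos_of_mul_nonneg_right ((norm_nonneg _).trans (h i j)) hL)
    have hX : X = 0 := Matrix.ext fun i j => norm_le_zero_iff.mp (by simpa [hY] using h i j)
    simp [hX, hY, frobeniusNorm]

theorem Matrix.star_mul_conj_diagonal_sub_conj_diagonal_mul_apply {n R : Type*} [Fintype n]
    [DecidableEq n] [CommRing R] [StarRing R] {U V : Matrix n n R}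
    (hU : U ∈ unitaryGroup n R) (hV : V ∈ unitaryGroup n R) (d e : n → R) (i j : n) :
    (star U * (U * diagonal d * star U - V * diagonal e * star V) * V) i j =
      (d i - e j) * (star U * V) i j := by
  have hUd : star U * (U * diagonal d * star U) * V = diagonal d * (star U * V) := by
    simp only [← Matrix.mul_assoc, Unitary.star_mul_self_of_mem hU, Matrix.one_mul]
  have hVe : star U * (V * diagonal e * star V) * V = star U * V * diagonal e := by
    simp only [Matrix.mul_assoc, Unitary.star_mul_self_of_mem hV, Matrix.mul_one]
  rw [Matrix.mul_sub, Matrix.sub_mul, hUd, hVe, sub_apply, diagonal_mul, mul_diagonal]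
  ring

theorem IsHermitian.applyFun_id {n : ℕ} {A : Matrix (Fin n) (Fin n) ℂ} (hA : A.IsHermitian) :
    IsHermitian.applyFun hA id = A := by
  conv_rhs => rw [hA.spectral_theorem]
  rfl

/-- **Birman–Solomyak bound, finite-dimensional case.** If all eigenvalues of the
Hermitian matrices `A` and `B` lie in `[a,b]` and `f` is Lipschitz with constant `L`
on `[a,b]`, then `‖f(A) − f(B)‖_F ≤ L·‖A − B‖_F`. -/
theorem frobenius_norm_applyFun_sub_le {n : ℕ} (A B : Matrix (Fin n) (Fin n) ℂ)
    (hA : A.IsHermitian) (hB : B.IsHermitian) (a b L : ℝ)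
    (hAab : ∀ i, hA.eigenvalues i ∈ Set.Icc a b)
    (hBab : ∀ i, hB.eigenvalues i ∈ Set.Icc a b)
    (f : ℝ → ℝ) (hf : ∀ s ∈ Set.Icc a b, ∀ t ∈ Set.Icc a b, |f s - f t| ≤ L * |s - t|) :
    frobeniusNorm (IsHermitian.applyFun hA f - IsHermitian.applyFun hB f) ≤
      L * frobeniusNorm (A - B) := by
  have hAB : A - B = IsHermitian.applyFun hA id - IsHermitian.applyFun hB id := by
    rw [IsHermitian.applyFun_id, IsHermitian.applyFun_id]
  have hU := hA.eigenvectorUnitary.2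
  have hV := hB.eigenvectorUnitary.2
  rw [hAB, ← frobeniusNorm_star_mul_mul_of_mem_unitaryGroup hU hV,
    ← frobeniusNorm_star_mul_mul_of_mem_unitaryGroup hU hV (_ - _)]
  refine frobeniusNorm_le_mul_of_forall_norm_le fun i j => ?_
  simp only [IsHermitian.applyFun, star_mul_conj_diagonal_sub_conj_diagonal_mul_apply hU hV,
    norm_mul]
  rw [← mul_assoc]
  gcongr
  simpa only [← Complex.ofReal_sub, Complex.norm_real, Real.norm_eq_abs, id] using
    hf _ (hAab i) _ (hBab j)
end

section
/- (Krein trace formula, finite-dimensional case.) Let A, B be n×n Hermitian complex matrices with eigenvalues a_1,…,a_n and b_1,…,b_n counted with multiplicity, and define ξ : ℝ → ℤ by ξ(λ) = #{ j : b_j < λ } − #{ j : a_j < λ }. Then: (i) |ξ(λ)| ≤ n for all λ, and ξ(λ) = 0 whenever λ ≤ min of all eigenvalues of A and B or λ > max of all eigenvalues of A and B; (ii) for every continuously differentiable f : ℝ → ℝ, Tr f(A) − Tr f(B) = ∫_ℝ f′(λ) ξ(λ) dλ; (iii) ∫_ℝ ξ(λ) dλ = Tr(A − B). -/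
/-!
For each index `j`, the `j`-th summand of `ξ` is `1` on `(bⱼ, aⱼ]`, `-1` on `(aⱼ, bⱼ]` and `0`
elsewhere, so integrating `f' ξ` gives `∑ⱼ ∫_{bⱼ}^{aⱼ} f' = ∑ⱼ (f aⱼ - f bⱼ)` by the fundamental
theorem of calculus. Taking `f = id` and writing traces as sums of eigenvalues gives (iii).
-/

open MeasureTheory Set Finset

theorem Set.indicator_Ioi_sub_indicator_Ioi {α M : Type*} [LinearOrder α] [AddGroup M]
    (u v : α) (g : α → M) :
    (Ioi v).indicator g - (Ioi u).indicator g = (Ioc v u).indicator g - (Ioc u v).indicator g := by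
  rcases le_total v u with h | h
  · rw [← indicator_sdiff (Ioi_subset_Ioi h), Ioi_sdiff_Ioi, Ioc_eq_empty_of_le h,
      indicator_empty', sub_zero]
  · rw [← neg_sub, ← indicator_sdiff (Ioi_subset_Ioi h), Ioi_sdiff_Ioi, Ioc_eq_empty_of_le h,
      indicator_empty', zero_sub]

section SpectralShift

variable {ι : Type*} [Fintype ι]

noncomputable def spectralShift (a b : ι → ℝ) (x : ℝ) : ℤ :=
  #{j | b j < x} - #{j | a j < x}

variable (a b : ι → ℝ)

theorem abs_spectralShift_le (x : ℝ) : |spectralShift a b x| ≤ Fintype.card ι := by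
  have hb := card_filter_le univ fun j => b j < x
  have ha := card_filter_le univ fun j => a j < x
  rw [spectralShift, abs_sub_le_iff, card_univ] at *
  omega

theorem spectralShift_of_forall_le {x : ℝ} (ha : ∀ j, x ≤ a j) (hb : ∀ j, x ≤ b j) :
    spectralShift a b x = 0 := by
  simp [spectralShift, filter_false_of_mem, not_lt.mpr, ha, hb]

theorem spectralShift_of_forall_lt {x : ℝ} (ha : ∀ j, a j < x) (hb : ∀ j, b j < x) :
    spectralShift a b x = 0 := by
  simp [spectralShift, ha, hb]

theorem mul_spectralShift_eq_sum (g : ℝ → ℝ) (x : ℝ) :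
    g x * spectralShift a b x
      = ∑ j, ((Ioc (b j) (a j)).indicator g x - (Ioc (a j) (b j)).indicator g x) := by
  have h : g x * spectralShift a b x
      = ∑ j, ((Ioi (b j)).indicator g x - (Ioi (a j)).indicator g x) := by
    simp only [spectralShift, card_filter, indicator_apply, Set.mem_Ioi]
    push_cast
    simp only [mul_sub, mul_sum, mul_ite, mul_one, mul_zero, sum_sub_distrib]
  rw [h]
  exact sum_congr rfl fun j _ => congrFun (indicator_Ioi_sub_indicator_Ioi (a j) (b j) g) x

theorem integral_mul_spectralShift {μ : Measure ℝ} {g : ℝ → ℝ}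
    (hg : ∀ j, IntervalIntegrable g μ (b j) (a j)) :
    ∫ x, g x * spectralShift a b x ∂μ = ∑ j, ∫ x in b j..a j, g x ∂μ := by
  have hfwd (j) : Integrable (fun x => (Ioc (b j) (a j)).indicator g x) μ :=
    (hg j).1.integrable_indicator measurableSet_Ioc
  have hback (j) : Integrable (fun x => (Ioc (a j) (b j)).indicator g x) μ :=
    (hg j).2.integrable_indicator measurableSet_Ioc
  simp_rw [mul_spectralShift_eq_sum]
  rw [integral_finsetSum univ fun j _ => by exact (hfwd j).sub (hback j)]
  refine sum_congr rfl fun j _ => ?_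
  rw [integral_sub (hfwd j) (hback j), integral_indicator measurableSet_Ioc,
    integral_indicator measurableSet_Ioc, intervalIntegral]

theorem sum_sub_sum_eq_integral_deriv_mul_spectralShift {f : ℝ → ℝ} (hf : ContDiff ℝ 1 f) :
    ∑ i, f (a i) - ∑ i, f (b i) = ∫ x, deriv f x * spectralShift a b x := by
  have hf' : Continuous (deriv f) := hf.continuous_deriv le_rfl
  rw [integral_mul_spectralShift a b fun j => hf'.intervalIntegrable _ _, ← sum_sub_distrib]
  refine sum_congr rfl fun j _ => ?_
  rw [intervalIntegral.integral_deriv_eq_sub (fun x _ => hf.differentiable one_ne_zero x)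
    (hf'.intervalIntegrable _ _)]

theorem integral_spectralShift : ∫ x, (spectralShift a b x : ℝ) = ∑ i, a i - ∑ i, b i := by
  simpa using (sum_sub_sum_eq_integral_deriv_mul_spectralShift a b contDiff_id).symm

end SpectralShift

/-- **Krein trace formula, finite-dimensional case.** For Hermitian matrices `A`, `B`
with eigenvalues `aⱼ`, `bⱼ`, the spectral shift function
`ξ(λ) = #{j : bⱼ < λ} − #{j : aⱼ < λ}` satisfies `|ξ| ≤ n`, vanishes below the
smallest and above the largest eigenvalue, obeys
`Tr f(A) − Tr f(B) = ∫ f′(λ) ξ(λ) dλ` for `C¹` functions `f`, and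
`∫ ξ(λ) dλ = Tr(A − B)`. -/
theorem krein_trace_formula_finiteDim {n : ℕ} (A B : Matrix (Fin n) (Fin n) ℂ)
    (hA : A.IsHermitian) (hB : B.IsHermitian) (ξ : ℝ → ℤ)
    (hξ : ∀ x : ℝ,
      ξ x = ((Finset.univ.filter fun j => hB.eigenvalues j < x).card : ℤ)
          - ((Finset.univ.filter fun j => hA.eigenvalues j < x).card : ℤ)) :
    (∀ x : ℝ, |ξ x| ≤ (n : ℤ)) ∧
    (∀ x : ℝ, (∀ j, x ≤ hA.eigenvalues j) → (∀ j, x ≤ hB.eigenvalues j) → ξ x = 0) ∧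
    (∀ x : ℝ, (∀ j, hA.eigenvalues j < x) → (∀ j, hB.eigenvalues j < x) → ξ x = 0) ∧
    (∀ f : ℝ → ℝ, ContDiff ℝ 1 f →
      (∑ i, f (hA.eigenvalues i)) - (∑ i, f (hB.eigenvalues i))
        = ∫ x : ℝ, deriv f x * (ξ x : ℝ)) ∧
    (((∫ x : ℝ, (ξ x : ℝ)) : ℂ) = Matrix.trace (A - B)) := by
  obtain rfl : ξ = spectralShift hA.eigenvalues hB.eigenvalues := funext hξ
  refine ⟨fun x => by simpa using abs_spectralShift_le hA.eigenvalues hB.eigenvalues x,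
    fun x => spectralShift_of_forall_le _ _, fun x => spectralShift_of_forall_lt _ _,
    fun f => sum_sub_sum_eq_integral_deriv_mul_spectralShift _ _, ?_⟩
  rw [integral_complex_ofReal, integral_spectralShift, Matrix.trace_sub,
    hA.trace_eq_sum_eigenvalues, hB.trace_eq_sum_eigenvalues]
  push_cast
  rfl
end

section
/- (Nonnegativity of the Koplienko spectral shift function, finite-dimensional case.) Let A, B be n×n Hermitian complex matrices, X = A − B, let (ψ_k)_{k=1}^n be an orthonormal basis of ℂⁿ with Bψ_k = b_k ψ_k (b_k ∈ ℝ), and let a_1,…,a_n be the eigenvalues of A counted with multiplicity. Define η : ℝ → ℝ by η(λ) = ∑_{k : b_k < λ} ⟨ψ_k, Xψ_k⟩ − ∑_{j=1}^n [ (λ − b_j)₊ − (λ − a_j)₊ ]. Then η(λ) ≥ 0 for Lebesgue-almost every λ ∈ ℝ. -/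
/-!
Let `φ_j` be an orthonormal eigenbasis of `A`. The matrix `M j k = ‖⟪φ_j, ψ_k⟫‖²` is doubly
stochastic, and `⟪ψ_k, X ψ_k⟫ = ∑_j a_j M j k - b_k`. Since `∑_j (λ - b_j)₊` only collects the
indices with `b_k < λ`, this rewrites `η(λ)` as `∑_j (t_j (a_j - λ) + (λ - a_j)₊)` with
`t_j = ∑_{b_k < λ} M j k ∈ [0, 1]`, and every summand is nonnegative. Hence `η ≥ 0` everywhere.
-/

open Matrix MeasureTheory

open scoped InnerProductSpace

section DoublyStochastic

variable {ι : Type*} [Fintype ι]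

theorem sum_max_sub_zero_eq_sum_filter (b : ι → ℝ) (x : ℝ) :
    ∑ k, max (x - b k) 0 = ∑ k ∈ Finset.univ.filter (b · < x), (x - b k) := by
  rw [Finset.sum_filter]
  refine Finset.sum_congr rfl fun k _ => ?_
  split_ifs with h
  · exact max_eq_left (by linarith)
  · exact max_eq_right (by linarith)

theorem mul_sub_add_max_sub_nonneg {t : ℝ} (ht₀ : 0 ≤ t) (ht₁ : t ≤ 1) (a x : ℝ) :
    0 ≤ t * (a - x) + max (x - a) 0 := by
  rcases le_total a x with h | h
  · rw [max_eq_left (by linarith)]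
    nlinarith
  · rw [max_eq_right (by linarith)]
    positivity

theorem vecMul_sub_eq_sum_mul_sub {M : Matrix ι ι ℝ} {k : ι} (hk : ∑ j, M j k = 1)
    (a : ι → ℝ) (x : ℝ) : (a ᵥ* M) k - x = ∑ j, M j k * (a j - x) :=
  calc (a ᵥ* M) k - x = ∑ j, a j * M j k - (∑ j, M j k) * x := by rw [hk, one_mul]; rfl
    _ = ∑ j, M j k * (a j - x) := by
      rw [Finset.sum_mul, ← Finset.sum_sub_distrib]
      exact Finset.sum_congr rfl fun j _ => by ring

theorem sum_filter_vecMul_sub_sub_sum_max_nonneg [DecidableEq ι] {M : Matrix ι ι ℝ}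
    (hM : M ∈ doublyStochastic ℝ ι) (a b : ι → ℝ) (x : ℝ) :
    0 ≤ ∑ k ∈ Finset.univ.filter (b · < x), ((a ᵥ* M) k - b k)
      - ∑ j, (max (x - b j) 0 - max (x - a j) 0) := by
  set S := Finset.univ.filter (b · < x)
  have hsplit : ∑ k ∈ S, ((a ᵥ* M) k - b k) - ∑ j, (max (x - b j) 0 - max (x - a j) 0)
      = ∑ j, ((∑ k ∈ S, M j k) * (a j - x) + max (x - a j) 0) :=
    calc _ = ∑ k ∈ S, ((a ᵥ* M) k - x) + ∑ j, max (x - a j) 0 := by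
          rw [Finset.sum_sub_distrib (f := fun j => max (x - b j) 0),
            sum_max_sub_zero_eq_sum_filter, sub_sub_eq_add_sub, add_sub_right_comm,
            ← Finset.sum_sub_distrib]
          congr 1
          exact Finset.sum_congr rfl fun k _ => by ring
      _ = ∑ j, (∑ k ∈ S, M j k) * (a j - x) + ∑ j, max (x - a j) 0 := by
          simp only [vecMul_sub_eq_sum_mul_sub (sum_col_of_mem_doublyStochastic hM _),
            Finset.sum_mul]
          rw [Finset.sum_comm]
      _ = _ := Finset.sum_add_distrib.symm
  rw [hsplit]
  refine Finset.sum_nonneg fun j _ => mul_sub_add_max_sub_nonneg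
    (Finset.sum_nonneg fun k _ => nonneg_of_mem_doublyStochastic hM) ?_ _ _
  calc ∑ k ∈ S, M j k ≤ ∑ k, M j k :=
        Finset.sum_le_sum_of_subset_of_nonneg S.subset_univ fun k _ _ =>
          nonneg_of_mem_doublyStochastic hM
    _ = 1 := sum_row_of_mem_doublyStochastic hM j

end DoublyStochastic

section InnerProduct

variable {𝕜 E ι : Type*} [RCLike 𝕜] [NormedAddCommGroup E] [InnerProductSpace 𝕜 E] [Fintype ι]

theorem OrthonormalBasis.sq_norm_inner_mem_doublyStochastic [DecidableEq ι]
    (u v : OrthonormalBasis ι 𝕜 E) :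
    Matrix.of (fun i j => ‖⟪u i, v j⟫_𝕜‖ ^ 2) ∈ doublyStochastic ℝ ι := by
  refine mem_doublyStochastic_iff_sum.2 ⟨fun i j => sq_nonneg _, fun i => ?_, fun j => ?_⟩
  · simp [v.sum_sq_norm_inner_left, u.orthonormal.1 i]
  · simp [u.sum_sq_norm_inner_right, v.orthonormal.1 j]

theorem LinearMap.IsSymmetric.inner_map_self_eq_sum {T : E →ₗ[𝕜] E} (hT : T.IsSymmetric)
    (u : OrthonormalBasis ι 𝕜 E) {μ : ι → ℝ} (hu : ∀ j, T (u j) = (μ j : 𝕜) • u j) (v : E) :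
    ⟪v, T v⟫_𝕜 = ((∑ j, μ j * ‖⟪u j, v⟫_𝕜‖ ^ 2 : ℝ) : 𝕜) := by
  rw [← u.sum_inner_mul_inner, RCLike.ofReal_sum]
  refine Finset.sum_congr rfl fun j _ => ?_
  rw [← hT, hu, inner_smul_left, RCLike.conj_ofReal, ← inner_conj_symm, RCLike.ofReal_mul,
    RCLike.ofReal_pow, ← RCLike.conj_mul]
  ring

variable [DecidableEq ι]

theorem Matrix.IsHermitian.star_dotProduct_mulVec_eq_sum {A : Matrix ι ι 𝕜}
    (hA : A.IsHermitian) (v : ι → 𝕜) :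
    star v ⬝ᵥ (A *ᵥ v) =
      ((∑ j, hA.eigenvalues j * ‖⟪hA.eigenvectorBasis j, WithLp.toLp 2 v⟫_𝕜‖ ^ 2 : ℝ) : 𝕜) := by
  rw [← (isSymmetric_toEuclideanLin_iff.mpr hA).inner_map_self_eq_sum hA.eigenvectorBasis
    (fun j => ?_), dotProduct_comm]
  · rfl
  · rw [toLpLin_apply, hA.mulVec_eigenvectorBasis, RCLike.real_smul_eq_coe_smul (K := 𝕜)]
    rfl

theorem orthonormal_toLp_iff {ψ : ι → ι → 𝕜} :
    Orthonormal 𝕜 (fun k => WithLp.toLp 2 (ψ k)) ↔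
      ∀ k l, star (ψ k) ⬝ᵥ ψ l = if k = l then 1 else 0 := by
  rw [orthonormal_iff_ite]
  simp only [EuclideanSpace.inner_toLp_toLp, dotProduct_comm (ψ _)]

end InnerProduct

theorem koplienko_ssf_nonneg_finiteDim_general {n : ℕ} (A B : Matrix (Fin n) (Fin n) ℂ)
    (hA : A.IsHermitian)
    (X : Matrix (Fin n) (Fin n) ℂ) (hX : X = A - B)
    (ψ : Fin n → (Fin n → ℂ)) (b : Fin n → ℝ)
    (hortho : ∀ k l, star (ψ k) ⬝ᵥ ψ l = if k = l then (1 : ℂ) else 0)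
    (heig : ∀ k, B *ᵥ ψ k = (b k : ℂ) • ψ k)
    (η : ℝ → ℝ)
    (hη : ∀ x : ℝ,
      η x = (∑ k ∈ Finset.univ.filter fun k => b k < x, (star (ψ k) ⬝ᵥ (X *ᵥ ψ k)).re)
          - ∑ j, (max (x - b j) 0 - max (x - hA.eigenvalues j) 0)) :
    ∀ᵐ x : ℝ ∂volume, 0 ≤ η x := by
  have hψ : Orthonormal ℂ (fun k => WithLp.toLp 2 (ψ k)) := orthonormal_toLp_iff.2 hortho
  let ψB := OrthonormalBasis.mk hψ
    (hψ.linearIndependent.span_eq_top_of_card_eq_finrank' (by simp)).ge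
  have hM := hA.eigenvectorBasis.sq_norm_inner_mem_doublyStochastic ψB
  have hdiag : ∀ k, (star (ψ k) ⬝ᵥ (X *ᵥ ψ k)).re
      = (hA.eigenvalues ᵥ* Matrix.of fun j k => ‖⟪hA.eigenvectorBasis j, ψB k⟫_ℂ‖ ^ 2) k
        - b k := by
    intro k
    rw [hX, sub_mulVec, dotProduct_sub, hA.star_dotProduct_mulVec_eq_sum, heig k,
      dotProduct_smul, hortho, if_pos rfl, smul_eq_mul, mul_one, Complex.sub_re,
      Complex.ofReal_re, OrthonormalBasis.coe_mk]
    rfl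
  refine ae_of_all _ fun x => ?_
  rw [hη x]
  simp only [hdiag]
  exact sum_filter_vecMul_sub_sub_sum_max_nonneg hM _ _ x

/-- **Nonnegativity of the Koplienko spectral shift function, finite-dimensional
case.** With `X = A − B`, `(ψ_k)` an orthonormal eigenbasis of `B` with eigenvalues
`b_k`, and `a_j` the eigenvalues of `A`, the function
`η(λ) = ∑_{k : b_k < λ} ⟨ψ_k, Xψ_k⟩ − ∑_j [(λ−b_j)₊ − (λ−a_j)₊]` is nonnegative
Lebesgue-almost everywhere. -/
theorem koplienko_ssf_nonneg_finiteDim {n : ℕ} (A B : Matrix (Fin n) (Fin n) ℂ)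
    (hA : A.IsHermitian) (hB : B.IsHermitian)
    (X : Matrix (Fin n) (Fin n) ℂ) (hX : X = A - B)
    (ψ : Fin n → (Fin n → ℂ)) (b : Fin n → ℝ)
    (hortho : ∀ k l, star (ψ k) ⬝ᵥ ψ l = if k = l then (1 : ℂ) else 0)
    (heig : ∀ k, B *ᵥ ψ k = (b k : ℂ) • ψ k)
    (η : ℝ → ℝ)
    (hη : ∀ x : ℝ,
      η x = (∑ k ∈ Finset.univ.filter fun k => b k < x, (star (ψ k) ⬝ᵥ (X *ᵥ ψ k)).re)
          - ∑ j, (max (x - b j) 0 - max (x - hA.eigenvalues j) 0)) :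
    ∀ᵐ x : ℝ ∂volume, 0 ≤ η x :=
  koplienko_ssf_nonneg_finiteDim_general A B hA X hX ψ b hortho heig η hη
end

section
/- (Total mass of the Koplienko spectral shift function, finite-dimensional case.) Let A, B be n×n Hermitian complex matrices, X = A − B, let (ψ_k)_{k=1}^n be an orthonormal basis of ℂⁿ with Bψ_k = b_k ψ_k (b_k ∈ ℝ), and let a_1,…,a_n be the eigenvalues of A counted with multiplicity. Define η : ℝ → ℝ by η(λ) = ∑_{k : b_k < λ} ⟨ψ_k, Xψ_k⟩ − ∑_{j=1}^n [ (λ − b_j)₊ − (λ − a_j)₊ ]. Then ∫_ℝ η(λ) dλ = (1/2) · Tr(X²) = (1/2) · ‖A − B‖_F², and consequently ∫_ℝ |η(λ)| dλ = (1/2) · ‖A − B‖_F². -/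
/-!
Let `U` be a unitary eigenbasis of `A` and `V` the unitary matrix with columns `ψ k`. The
weights `P j k = ‖(Uᴴ V) j k‖²` form a doubly stochastic matrix, and since
`(Uᴴ X V) j k = (a j - b k) (Uᴴ V) j k` we get `⟨ψ k, X ψ k⟩ = ∑ j, P j k (a j - b k)`.
Averaging with `P` turns `η` into `∑ j k, P j k · koplienkoKernel (a j) (b k)`, where each
kernel is `|λ - a|` on the interval between `a` and `b` and vanishes elsewhere: it is
nonnegative with integral `(a - b)² / 2`. Finally
`∑ j k, P j k (a j - b k)² = ‖Uᴴ X V‖_F² = ‖X‖_F² = Tr (X²)`.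
-/

open Matrix MeasureTheory

noncomputable def koplienkoKernel (a b x : ℝ) : ℝ :=
  (if b < x then a - b else 0) - max (x - b) 0 + max (x - a) 0

lemma koplienkoKernel_eq_indicator (a b : ℝ) :
    koplienkoKernel a b = (Set.Ioc (min a b) (max a b)).indicator (fun x => |x - a|) := by
  funext x
  simp only [koplienkoKernel, Set.indicator_apply, Set.mem_Ioc, min_lt_iff, le_max_iff]
  rcases le_total x a with hxa | hxa <;> rcases le_total x b with hxb | hxb <;>
    split_ifs <;> grind

lemma koplienkoKernel_nonneg (a b x : ℝ) : 0 ≤ koplienkoKernel a b x := by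
  rw [koplienkoKernel_eq_indicator]
  exact Set.indicator_nonneg (fun _ _ => abs_nonneg _) x

lemma integrable_koplienkoKernel (a b : ℝ) : Integrable (koplienkoKernel a b) := by
  rw [koplienkoKernel_eq_indicator, integrable_indicator_iff measurableSet_Ioc]
  exact (continuous_id.sub continuous_const).abs.integrableOn_Ioc

lemma integral_koplienkoKernel (a b : ℝ) : ∫ x, koplienkoKernel a b x = (a - b) ^ 2 / 2 := by
  rw [koplienkoKernel_eq_indicator, integral_indicator measurableSet_Ioc,
    ← intervalIntegral.integral_of_le min_le_max]
  rcases le_total a b with h | h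
  · rw [min_eq_left h, max_eq_right h,
      intervalIntegral.integral_congr fun x hx =>
        abs_of_nonneg (sub_nonneg.2 (Set.uIcc_of_le h ▸ hx).1),
      intervalIntegral.integral_comp_sub_right (fun x => x), integral_id]
    ring
  · rw [min_eq_right h, max_eq_left h,
      intervalIntegral.integral_congr fun x hx =>
        (abs_sub_comm x a).trans (abs_of_nonneg (sub_nonneg.2 (Set.uIcc_of_le h ▸ hx).2)),
      intervalIntegral.integral_comp_sub_left (fun x => x), integral_id]
    ring

lemma sum_sum_mul_koplienkoKernel {n : Type*} [Fintype n] [DecidableEq n] {P : Matrix n n ℝ}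
    (hP : P ∈ doublyStochastic ℝ n) (a b : n → ℝ) (x : ℝ) :
    ∑ j, ∑ k, P j k * koplienkoKernel (a j) (b k) x =
      ∑ k ∈ Finset.univ.filter (fun k => b k < x), ∑ j, P j k * (a j - b k)
        - ∑ j, (max (x - b j) 0 - max (x - a j) 0) := by
  have hjump : ∑ j, ∑ k, P j k * (if b k < x then a j - b k else 0) =
      ∑ k ∈ Finset.univ.filter (fun k => b k < x), ∑ j, P j k * (a j - b k) := by
    rw [Finset.sum_comm, Finset.sum_filter]
    simp only [mul_ite, mul_zero, Finset.sum_ite_irrel, Finset.sum_const_zero]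
  have hb : ∑ j, ∑ k, P j k * max (x - b k) 0 = ∑ k, max (x - b k) 0 := by
    rw [Finset.sum_comm]
    simp only [← Finset.sum_mul, sum_col_of_mem_doublyStochastic hP, one_mul]
  have ha : ∑ j, ∑ k, P j k * max (x - a j) 0 = ∑ j, max (x - a j) 0 := by
    simp only [← Finset.sum_mul, sum_row_of_mem_doublyStochastic hP, one_mul]
  simp only [koplienkoKernel, mul_add, mul_sub, Finset.sum_add_distrib, Finset.sum_sub_distrib,
    hjump, hb, ha]
  ring

lemma integral_sum_sum_mul_koplienkoKernel {ι κ : Type*} [Fintype ι] [Fintype κ]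
    (P : Matrix ι κ ℝ) (a : ι → ℝ) (b : κ → ℝ) :
    ∫ x, ∑ j, ∑ k, P j k * koplienkoKernel (a j) (b k) x =
      (∑ j, ∑ k, P j k * (a j - b k) ^ 2) / 2 := by
  have hint : ∀ j k, Integrable fun x => P j k * koplienkoKernel (a j) (b k) x :=
    fun j k => (integrable_koplienkoKernel _ _).const_mul _
  rw [integral_finsetSum _ fun j _ => integrable_finsetSum _ fun k _ => hint j k, Finset.sum_div]
  refine Finset.sum_congr rfl fun j _ => ?_
  rw [integral_finsetSum _ fun k _ => hint j k, Finset.sum_div]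
  simp only [integral_const_mul, integral_koplienkoKernel, mul_div_assoc]

namespace Matrix

variable {𝕜 m n : Type*} [RCLike 𝕜] [Fintype m] [Fintype n]

lemma trace_conjTranspose_mul_self_eq_sum_norm_sq (M : Matrix m n 𝕜) :
    (Mᴴ * M).trace = ((∑ i, ∑ j, ‖M i j‖ ^ 2 : ℝ) : 𝕜) := by
  simp only [trace, diag, mul_apply, conjTranspose_apply, ← starRingEnd_apply, RCLike.conj_mul]
  rw [Finset.sum_comm]
  push_cast
  rfl

lemma IsHermitian.trace_mul_self_eq_sum_norm_sq {M : Matrix n n 𝕜} (hM : M.IsHermitian) :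
    (M * M).trace = ((∑ i, ∑ j, ‖M i j‖ ^ 2 : ℝ) : 𝕜) := by
  nth_rw 1 [← hM]
  exact trace_conjTranspose_mul_self_eq_sum_norm_sq M

variable [DecidableEq m] [DecidableEq n]

lemma sum_norm_sq_mul_mul_of_mem_unitaryGroup {U : Matrix m m 𝕜} {V : Matrix n n 𝕜}
    (hU : U ∈ unitaryGroup m 𝕜) (hV : V ∈ unitaryGroup n 𝕜) (M : Matrix m n 𝕜) :
    ∑ i, ∑ j, ‖(U * M * V) i j‖ ^ 2 = ∑ i, ∑ j, ‖M i j‖ ^ 2 := by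
  have hU' : Uᴴ * U = 1 := mem_unitaryGroup_iff'.1 hU
  have hV' : V * Vᴴ = 1 := mem_unitaryGroup_iff.1 hV
  apply RCLike.ofReal_injective (K := 𝕜)
  rw [← trace_conjTranspose_mul_self_eq_sum_norm_sq,
    ← trace_conjTranspose_mul_self_eq_sum_norm_sq, conjTranspose_mul, conjTranspose_mul]
  calc (Vᴴ * (Mᴴ * Uᴴ) * (U * M * V)).trace
      = (Vᴴ * (Mᴴ * (Uᴴ * U) * M) * V).trace := by simp only [Matrix.mul_assoc]
    _ = (Mᴴ * M).trace := by
        rw [hU', Matrix.mul_one, trace_mul_comm, ← Matrix.mul_assoc, hV', Matrix.one_mul]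

lemma sum_norm_sq_row_of_mem_unitaryGroup {U : Matrix n n 𝕜} (hU : U ∈ unitaryGroup n 𝕜)
    (i : n) : ∑ j, ‖U i j‖ ^ 2 = 1 := by
  apply RCLike.ofReal_injective (K := 𝕜)
  have h := congrFun₂ (mem_unitaryGroup_iff.1 hU) i i
  simp only [mul_apply, star_apply, ← starRingEnd_apply, RCLike.mul_conj, one_apply_eq] at h
  push_cast
  exact h

lemma norm_sq_mem_doublyStochastic {U : Matrix n n 𝕜} (hU : U ∈ unitaryGroup n 𝕜) :
    (of fun i j => ‖U i j‖ ^ 2) ∈ doublyStochastic ℝ n :=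
  mem_doublyStochastic_iff_sum.2 ⟨fun _ _ => sq_nonneg _,
    sum_norm_sq_row_of_mem_unitaryGroup hU,
    sum_norm_sq_row_of_mem_unitaryGroup (transpose_mem_unitaryGroup_iff.2 hU)⟩

lemma IsHermitian.star_eigenvectorUnitary_mul {A : Matrix n n 𝕜} (hA : A.IsHermitian) :
    star (hA.eigenvectorUnitary : Matrix n n 𝕜) * A =
      diagonal (RCLike.ofReal ∘ hA.eigenvalues) *
        star (hA.eigenvectorUnitary : Matrix n n 𝕜) := by
  have h := hA.conjStarAlgAut_star_eigenvectorUnitary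
  rw [Unitary.conjStarAlgAut_star_apply] at h
  rw [← h, mul_assoc, mem_unitaryGroup_iff.1 hA.eigenvectorUnitary.2, mul_one]

lemma mul_transpose_of_eq_transpose_of_mul_diagonal {B : Matrix n n 𝕜} {ψ : n → n → 𝕜}
    {d : n → 𝕜} (hψ : ∀ k, B *ᵥ ψ k = d k • ψ k) : B * (of ψ)ᵀ = (of ψ)ᵀ * diagonal d := by
  ext i k
  rw [mul_diagonal, show (B * (of ψ)ᵀ) i k = (B *ᵥ ψ k) i from rfl, hψ k]
  simp [mul_comm]

lemma transpose_of_mem_unitaryGroup {ψ : n → n → 𝕜}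
    (hψ : ∀ k l, star (ψ k) ⬝ᵥ ψ l = if k = l then 1 else 0) :
    (of ψ)ᵀ ∈ unitaryGroup n 𝕜 := by
  rw [mem_unitaryGroup_iff']
  ext k l
  simpa [mul_apply, dotProduct, one_apply] using hψ k l

section RelativeEigenbasis

variable {A B U V : Matrix n n 𝕜} {a b : n → ℝ}

lemma star_mul_sub_mul_apply (hA : star U * A = diagonal (RCLike.ofReal ∘ a) * star U)
    (hB : B * V = V * diagonal (RCLike.ofReal ∘ b)) (j k : n) :
    (star U * (A - B) * V) j k = (a j - b k : 𝕜) * (star U * V) j k := by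
  rw [Matrix.mul_sub, Matrix.sub_mul, hA, Matrix.mul_assoc (star U) B, hB, Matrix.mul_assoc,
    ← Matrix.mul_assoc (star U) V]
  simp only [sub_apply, diagonal_mul, mul_diagonal, Function.comp_apply]
  ring

lemma star_mul_sub_mul_apply_diag (hU : U ∈ unitaryGroup n 𝕜)
    (hA : star U * A = diagonal (RCLike.ofReal ∘ a) * star U)
    (hB : B * V = V * diagonal (RCLike.ofReal ∘ b)) (k : n) :
    (star V * (A - B) * V) k k =
      ((∑ j, ‖(star U * V) j k‖ ^ 2 * (a j - b k) : ℝ) : 𝕜) := by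
  have hUU : U * star U = 1 := mem_unitaryGroup_iff.1 hU
  have hfactor : star V * (A - B) * V = star (star U * V) * (star U * (A - B) * V) := by
    simp only [star_mul, star_star, mul_assoc]
    rw [← mul_assoc U, hUU, one_mul]
  rw [hfactor, mul_apply]
  push_cast
  refine Finset.sum_congr rfl fun j _ => ?_
  rw [star_mul_sub_mul_apply hA hB, star_apply, ← starRingEnd_apply, ← mul_assoc,
    mul_comm _ (_ - _), mul_assoc, RCLike.conj_mul]
  ring

lemma sum_norm_sq_star_mul_mul_sq_sub (hU : U ∈ unitaryGroup n 𝕜)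
    (hV : V ∈ unitaryGroup n 𝕜)
    (hA : star U * A = diagonal (RCLike.ofReal ∘ a) * star U)
    (hB : B * V = V * diagonal (RCLike.ofReal ∘ b)) :
    ∑ j, ∑ k, ‖(star U * V) j k‖ ^ 2 * (a j - b k) ^ 2 = ∑ i, ∑ j, ‖(A - B) i j‖ ^ 2 := by
  rw [← sum_norm_sq_mul_mul_of_mem_unitaryGroup (Unitary.star_mem hU) hV]
  simp only [star_mul_sub_mul_apply hA hB, norm_mul, mul_pow, ← RCLike.ofReal_sub,
    RCLike.norm_ofReal, sq_abs, mul_comm]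

end RelativeEigenbasis

end Matrix

/-- **Total mass of the Koplienko spectral shift function, finite-dimensional
case.** With `X = A − B`, `(ψ_k)` an orthonormal eigenbasis of `B` with eigenvalues
`b_k`, and `a_j` the eigenvalues of `A`, the Koplienko spectral shift function
`η(λ) = ∑_{k : b_k < λ} ⟨ψ_k, Xψ_k⟩ − ∑_j [(λ−b_j)₊ − (λ−a_j)₊]` satisfies
`∫ η = ½·Tr(X²) = ½·‖A−B‖_F²` and `∫ |η| = ½·‖A−B‖_F²`. -/
theorem koplienko_ssf_total_mass_finiteDim {n : ℕ} (A B : Matrix (Fin n) (Fin n) ℂ)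
    (hA : A.IsHermitian) (hB : B.IsHermitian)
    (X : Matrix (Fin n) (Fin n) ℂ) (hX : X = A - B)
    (ψ : Fin n → (Fin n → ℂ)) (b : Fin n → ℝ)
    (hortho : ∀ k l, star (ψ k) ⬝ᵥ ψ l = if k = l then (1 : ℂ) else 0)
    (heig : ∀ k, B *ᵥ ψ k = (b k : ℂ) • ψ k)
    (η : ℝ → ℝ)
    (hη : ∀ x : ℝ,
      η x = (∑ k ∈ Finset.univ.filter fun k => b k < x, (star (ψ k) ⬝ᵥ (X *ᵥ ψ k)).re)
          - ∑ j, (max (x - b j) 0 - max (x - hA.eigenvalues j) 0)) :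
    (((∫ x : ℝ, η x) : ℂ) = (1 / 2) * Matrix.trace (X * X)) ∧
    ((∫ x : ℝ, η x) = (1 / 2) * ∑ i, ∑ j, ‖(A - B) i j‖ ^ 2) ∧
    ((∫ x : ℝ, |η x|) = (1 / 2) * ∑ i, ∑ j, ‖(A - B) i j‖ ^ 2) := by
  set a := hA.eigenvalues
  set U : Matrix (Fin n) (Fin n) ℂ := ↑hA.eigenvectorUnitary
  set V : Matrix (Fin n) (Fin n) ℂ := (of ψ)ᵀ
  set P : Matrix (Fin n) (Fin n) ℝ := of fun j k => ‖(star U * V) j k‖ ^ 2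
  have hU : U ∈ unitaryGroup (Fin n) ℂ := hA.eigenvectorUnitary.2
  have hV : V ∈ unitaryGroup (Fin n) ℂ := transpose_of_mem_unitaryGroup hortho
  have hAU := hA.star_eigenvectorUnitary_mul
  have hBV : B * V = V * diagonal (RCLike.ofReal ∘ b) :=
    mul_transpose_of_eq_transpose_of_mul_diagonal heig
  have hP : P ∈ doublyStochastic ℝ (Fin n) :=
    norm_sq_mem_doublyStochastic (mul_mem (Unitary.star_mem hU) hV)
  have hq (k) : (star (ψ k) ⬝ᵥ (X *ᵥ ψ k)).re = ∑ j, P j k * (a j - b k) := by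
    have hquad : star (ψ k) ⬝ᵥ ((A - B) *ᵥ ψ k) = (star V * (A - B) * V) k k :=
      (mul_mul_apply (star V) (A - B) V k k).symm
    rw [hX, hquad, star_mul_sub_mul_apply_diag hU hAU hBV]
    exact RCLike.ofReal_re (K := ℂ) _
  have hηP : η = fun x => ∑ j, ∑ k, P j k * koplienkoKernel (a j) (b k) x := by
    ext x
    simp only [hη, sum_sum_mul_koplienkoKernel hP, hq]
  have hmass : ∑ j, ∑ k, P j k * (a j - b k) ^ 2 = ∑ i, ∑ j, ‖(A - B) i j‖ ^ 2 :=
    sum_norm_sq_star_mul_mul_sq_sub hU hV hAU hBV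
  have hintegral : ∫ x, η x = 1 / 2 * ∑ i, ∑ j, ‖(A - B) i j‖ ^ 2 := by
    rw [hηP, integral_sum_sum_mul_koplienkoKernel, hmass]
    ring
  have hη_nonneg (x) : 0 ≤ η x := by
    rw [hηP]
    exact Finset.sum_nonneg fun j _ => Finset.sum_nonneg fun k _ =>
      mul_nonneg (nonneg_of_mem_doublyStochastic hP) (koplienkoKernel_nonneg _ _ _)
  refine ⟨?_, hintegral, ?_⟩
  · rw [integral_complex_ofReal, hintegral, hX, (hA.sub hB).trace_mul_self_eq_sum_norm_sq,
      RCLike.ofReal_eq_complex_ofReal]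
    push_cast
    ring
  · rw [integral_congr_ae (ae_of_all _ fun x => abs_of_nonneg (hη_nonneg x)), hintegral]
end

section
/- Every nonnegative Riemann integrable function of compact support is an L¹-limit of finite sums of the form ∑ |Iₙ|·χ_{Iₙ}: precisely, let η : ℝ → [0,∞) be bounded, vanishing outside a compact set, and continuous at Lebesgue-almost every point of ℝ. Then there exists a sequence of bounded open intervals (Iₙ)_{n∈ℕ} with ∑_{n=1}^∞ |Iₙ|² < ∞ such that for every N the partial sum ∑_{n=1}^N |Iₙ|·χ_{Iₙ}(λ) ≤ η(λ) for all λ ∈ ℝ, and ∫_ℝ | η(λ) − ∑_{n=1}^N |Iₙ|·χ_{Iₙ}(λ) | dλ → 0 as N → ∞. -/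
/-!
On the grid `ℓℤ`, replace `g` on each cell by its infimum rounded down to a multiple of `ℓ`. The
result is a finite sum of bumps `ℓ χ_cell` lying below `g`, and at every irrational point (never a
grid point for `ℓ = 1 / (n + 1)`) where `g` is continuous it converges to `g` as `ℓ → 0`; by
dominated convergence its integral tends to `∫ g`. What is left after subtracting such a sum is
again nonnegative, bounded, supported in `[a, b]` and continuous a.e., so the step can be repeated
with errors `1 / (k + 1)`, and concatenating the blocks gives the sequence of intervals. Since every
partial sum `S_N` stays below `η`, `∫ |η - S_N| = ∫ η - ∑_{m < N} |Iₘ|²`, which decreases to `0`;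
in particular `∑ |Iₘ|² ≤ ∫ η`.
-/

open MeasureTheory Set Filter Topology

noncomputable section

def intervalBump (p : ℝ × ℝ) (x : ℝ) : ℝ :=
  (p.2 - p.1) * (Ioo p.1 p.2).indicator (fun _ => (1 : ℝ)) x

def intervalBumpSum : Multiset (ℝ × ℝ) →+ ℝ → ℝ :=
  Multiset.sumAddMonoidHom.comp (Multiset.mapAddMonoidHom intervalBump)

namespace intervalBump

lemma nonneg {p : ℝ × ℝ} (hp : p.1 ≤ p.2) (x : ℝ) : 0 ≤ intervalBump p x :=
  mul_nonneg (sub_nonneg.2 hp) (indicator_nonneg (fun _ _ => zero_le_one) x)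

lemma integrable (p : ℝ × ℝ) : Integrable (intervalBump p) :=
  ((integrableOn_const measure_Ioo_lt_top.ne).integrable_indicator measurableSet_Ioo).const_mul _

lemma integral_eq {p : ℝ × ℝ} (hp : p.1 ≤ p.2) : ∫ x, intervalBump p x = (p.2 - p.1) ^ 2 := by
  simp [intervalBump, integral_const_mul, integral_indicator measurableSet_Ioo, hp, sq]

lemma ae_continuousAt (p : ℝ × ℝ) : ∀ᵐ x, ContinuousAt (intervalBump p) x := by
  filter_upwards [measure_eq_zero_iff_ae_notMem.1 ((convex_Ioo p.1 p.2).addHaar_frontier volume)]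
    with x hx
  exact continuousAt_const.mul (continuousOn_const.continuousAt_indicator hx)

end intervalBump

namespace intervalBumpSum

lemma eq_sum_map (L : Multiset (ℝ × ℝ)) : intervalBumpSum L = (L.map intervalBump).sum := rfl

lemma nonneg {L : Multiset (ℝ × ℝ)} (hL : ∀ p ∈ L, p.1 ≤ p.2) (x : ℝ) : 0 ≤ intervalBumpSum L x :=
  Multiset.sum_nonneg (s := L.map intervalBump) (fun _ hf => by
    obtain ⟨p, hp, rfl⟩ := Multiset.mem_map.1 hf
    exact intervalBump.nonneg (hL p hp)) x

lemma integrable (L : Multiset (ℝ × ℝ)) : Integrable (intervalBumpSum L) :=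
  Multiset.sum_induction (fun f => Integrable f volume) (L.map intervalBump)
    (fun _ _ => Integrable.add) (integrable_zero _ _ _) (fun _ hf => by
      obtain ⟨p, -, rfl⟩ := Multiset.mem_map.1 hf
      exact intervalBump.integrable p)

lemma ae_continuousAt (L : Multiset (ℝ × ℝ)) : ∀ᵐ x, ContinuousAt (intervalBumpSum L) x :=
  Multiset.sum_induction (fun f => ∀ᵐ x, ContinuousAt f x) (L.map intervalBump)
    (fun _ _ hf hg => by filter_upwards [hf, hg] with x using ContinuousAt.add)
    (ae_of_all _ fun _ => continuousAt_const) (fun _ hf => by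
      obtain ⟨p, -, rfl⟩ := Multiset.mem_map.1 hf
      exact intervalBump.ae_continuousAt p)

lemma coe_map_range (s : ℕ → ℝ × ℝ) (n : ℕ) (x : ℝ) :
    intervalBumpSum ((List.range n).map s) x = ∑ m ∈ Finset.range n, intervalBump (s m) x := by
  simp only [eq_sum_map, Multiset.map_coe, Multiset.sum_coe, List.map_map, ← Finset.sum_apply]
  rfl

lemma coe_append_cons_zero (B : List (ℝ × ℝ)) (C : Multiset (ℝ × ℝ)) :
    intervalBumpSum (B ++ (0, 0) :: C.toList) = intervalBumpSum (B + C) := by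
  ext x
  simp [eq_sum_map, intervalBump]

end intervalBumpSum

theorem tendsto_csInf_image_of_continuousAt {ι X β : Type*} [TopologicalSpace X]
    [ConditionallyCompleteLinearOrder β] [TopologicalSpace β] [OrderTopology β] [DenselyOrdered β]
    {l : Filter ι} {f : X → β} {x : X} {A : ι → Set X} (hf : ContinuousAt f x)
    (hA : Tendsto A l (𝓝 x).smallSets) (hxA : ∀ i, x ∈ A i) (hbdd : ∀ i, BddBelow (f '' A i)) :
    Tendsto (fun i => sInf (f '' A i)) l (𝓝 (f x)) := by
  refine tendsto_order.2 ⟨fun c hc => ?_, fun c hc => .of_forall fun i =>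
    (csInf_le (hbdd i) (mem_image_of_mem f (hxA i))).trans_lt hc⟩
  obtain ⟨c', hcc', hc'⟩ := exists_between hc
  filter_upwards [tendsto_smallSets_iff.1 hA _ (hf.preimage_mem_nhds (Ioi_mem_nhds hc'))] with i hi
  exact hcc'.trans_le <| le_csInf ((nonempty_of_mem (hxA i)).image f)
    (forall_mem_image.2 fun y hy => (hi hy).le)

theorem aestronglyMeasurable_of_ae_continuousAt {α β : Type*} [TopologicalSpace α]
    [MeasurableSpace α] [OpensMeasurableSpace α] [PseudoMetricSpace β]
    [SecondCountableTopologyEither α β] {μ : Measure α} {f : α → β}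
    (hf : ∀ᵐ x ∂μ, ContinuousAt f x) : AEStronglyMeasurable f μ := by
  rw [← Measure.restrict_eq_self_of_ae_mem hf]
  exact (continuousOn_of_forall_continuousAt fun _ hx => hx).aestronglyMeasurable
    (measurableSet_of_continuousAt f)

theorem exists_seq_map_range_eq_of_isPrefix {α : Type*} [Inhabited α] (L : ℕ → List α)
    (hL : ∀ k, L k <+: L (k + 1)) : ∃ s : ℕ → α, ∀ k, (List.range (L k).length).map s = L k := by
  have hmono : ∀ j k, j ≤ k → L j <+: L k := fun j k hjk => by
    induction k, hjk using Nat.le_induction with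
    | base => exact List.prefix_refl _
    | succ k _ ih => exact ih.trans (hL k)
  have agree : ∀ j k i (hj : i < (L j).length) (hk : i < (L k).length), (L j)[i] = (L k)[i] := by
    intro j k i hj hk
    rcases le_total j k with h | h
    · exact (hmono j k h).getElem hj
    · exact ((hmono k j h).getElem hk).symm
  classical
  refine ⟨fun i => if h : ∃ k, i < (L k).length then (L h.choose)[i]'h.choose_spec else default,
    fun k => List.ext_getElem (by simp) fun i _ hi => ?_⟩
  simp only [List.getElem_map, List.getElem_range, dif_pos (⟨k, hi⟩ : ∃ k, i < (L k).length)]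
  exact agree _ _ _ _ _

theorem exists_seq_of_forall_exists_append {α : Type*} [Inhabited α] {P : List α → Prop}
    {Q : ℕ → List α → Prop} (h0 : P [])
    (h : ∀ k B, P B → ∃ C, C ≠ [] ∧ P (B ++ C) ∧ Q k (B ++ C)) :
    ∃ s : ℕ → α, ∀ k, ∃ n > k, P ((List.range n).map s) ∧ Q k ((List.range n).map s) := by
  choose next hne hP hQ using h
  let L : ℕ → {B : List α // P B} := fun k =>
    Nat.rec ⟨[], h0⟩ (fun k B => ⟨B.1 ++ next k B.1 B.2, hP k B.1 B.2⟩) k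
  have hlen : ∀ k, k ≤ (L k).1.length := by
    intro k
    induction k with
    | zero => exact Nat.zero_le _
    | succ k ih =>
      have hpos := List.length_pos_iff.2 (hne k (L k).1 (L k).2)
      show k + 1 ≤ ((L k).1 ++ next k (L k).1 (L k).2).length
      rw [List.length_append]
      omega
  obtain ⟨s, hs⟩ := exists_seq_map_range_eq_of_isPrefix (fun k => (L k).1)
    fun k => List.prefix_append _ _
  refine ⟨s, fun k => ⟨(L (k + 1)).1.length, hlen (k + 1), ?_⟩⟩
  rw [hs (k + 1)]
  exact ⟨(L (k + 1)).2, hQ k (L k).1 (L k).2⟩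

theorem floor_div_mul_le {K : Type*} [Field K] [LinearOrder K] [IsStrictOrderedRing K]
    [FloorSemiring K] {c ℓ : K} (hc : 0 ≤ c) (hℓ : 0 < ℓ) : ⌊c / ℓ⌋₊ * ℓ ≤ c :=
  (le_div_iff₀ hℓ).1 (Nat.floor_le (div_nonneg hc hℓ.le))

theorem sub_lt_floor_div_mul {K : Type*} [Field K] [LinearOrder K] [IsStrictOrderedRing K]
    [FloorSemiring K] (c : K) {ℓ : K} (hℓ : 0 < ℓ) : c - ℓ < ⌊c / ℓ⌋₊ * ℓ := by
  have := (div_lt_iff₀ hℓ).1 (Nat.lt_floor_add_one (c / ℓ))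
  linarith [add_mul (⌊c / ℓ⌋₊ : K) 1 ℓ]

def gridCellInf (g : ℝ → ℝ) (ℓ : ℝ) (i : ℤ) : ℝ := sInf (g '' Icc (i * ℓ) ((i + 1) * ℓ))

def gridBumps (g : ℝ → ℝ) (a b ℓ : ℝ) : Multiset (ℝ × ℝ) :=
  ∑ i ∈ Finset.Icc ⌊a / ℓ⌋ ⌊b / ℓ⌋, ⌊gridCellInf g ℓ i / ℓ⌋₊ • {((i : ℝ) * ℓ, (i + 1) * ℓ)}

section Grid

variable {g : ℝ → ℝ} {a b ℓ x : ℝ} {i : ℤ}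

lemma gridCellInf_nonneg (hg : ∀ x, 0 ≤ g x) : 0 ≤ gridCellInf g ℓ i :=
  Real.sInf_nonneg (forall_mem_image.2 fun x _ => hg x)

lemma gridCellInf_le (hg : ∀ x, 0 ≤ g x) (hx : x ∈ Icc (i * ℓ) ((i + 1) * ℓ)) :
    gridCellInf g ℓ i ≤ g x :=
  csInf_le ⟨0, forall_mem_image.2 fun y _ => hg y⟩ (mem_image_of_mem g hx)

lemma floor_div_eq_of_mem_Ioo (hℓ : 0 < ℓ) (hx : x ∈ Ioo (i * ℓ) ((i + 1) * ℓ)) : ⌊x / ℓ⌋ = i :=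
  Int.floor_eq_iff.2 ⟨(le_div_iff₀ hℓ).2 hx.1.le, (div_lt_iff₀ hℓ).2 hx.2⟩

lemma mem_Ioo_floor_div (hℓ : 0 < ℓ) (hx : ∀ i : ℤ, x / ℓ ≠ i) :
    x ∈ Ioo (⌊x / ℓ⌋ * ℓ) ((⌊x / ℓ⌋ + 1) * ℓ) :=
  ⟨(lt_div_iff₀ hℓ).1 ((Int.floor_le _).lt_of_ne (hx _).symm),
    (div_lt_iff₀ hℓ).1 (Int.lt_floor_add_one _)⟩

lemma le_of_mem_gridBumps (hℓ : 0 ≤ ℓ) {p : ℝ × ℝ} (hp : p ∈ gridBumps g a b ℓ) : p.1 ≤ p.2 := by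
  obtain ⟨i, -, hi⟩ := Multiset.mem_sum.1 hp
  rw [Multiset.mem_singleton.1 (Multiset.mem_nsmul.1 hi).2]
  exact mul_le_mul_of_nonneg_right (by linarith) hℓ

lemma intervalBumpSum_gridBumps (x : ℝ) :
    intervalBumpSum (gridBumps g a b ℓ) x = ∑ i ∈ Finset.Icc ⌊a / ℓ⌋ ⌊b / ℓ⌋,
      (Ioo (i * ℓ) ((i + 1) * ℓ)).indicator (fun _ => ⌊gridCellInf g ℓ i / ℓ⌋₊ * ℓ) x := by
  simp only [gridBumps, map_sum, map_nsmul, Finset.sum_apply]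
  refine Finset.sum_congr rfl fun i _ => ?_
  simp only [intervalBumpSum.eq_sum_map, Multiset.map_singleton, Multiset.sum_singleton,
    nsmul_eq_mul, Pi.mul_apply, Pi.natCast_apply, intervalBump, indicator_apply, mem_Ioo]
  split_ifs <;> ring

lemma intervalBumpSum_gridBumps_of_mem (hℓ : 0 < ℓ) (hi : i ∈ Finset.Icc ⌊a / ℓ⌋ ⌊b / ℓ⌋)
    (hx : x ∈ Ioo (i * ℓ) ((i + 1) * ℓ)) :
    intervalBumpSum (gridBumps g a b ℓ) x = ⌊gridCellInf g ℓ i / ℓ⌋₊ * ℓ := by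
  rw [intervalBumpSum_gridBumps, Finset.sum_eq_single_of_mem i hi, indicator_of_mem hx]
  intro j _ hji
  exact indicator_of_notMem (fun hxj => hji <|
    (floor_div_eq_of_mem_Ioo hℓ hxj).symm.trans (floor_div_eq_of_mem_Ioo hℓ hx)) _

lemma intervalBumpSum_gridBumps_le (hg : ∀ x, 0 ≤ g x) (hℓ : 0 < ℓ) (x : ℝ) :
    intervalBumpSum (gridBumps g a b ℓ) x ≤ g x := by
  by_cases hx : ∃ i ∈ Finset.Icc ⌊a / ℓ⌋ ⌊b / ℓ⌋, x ∈ Ioo (i * ℓ) ((i + 1) * ℓ)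
  · obtain ⟨i, hi, hx⟩ := hx
    rw [intervalBumpSum_gridBumps_of_mem hℓ hi hx]
    exact (floor_div_mul_le (gridCellInf_nonneg hg) hℓ).trans
      (gridCellInf_le hg (Ioo_subset_Icc_self hx))
  · simp only [not_exists, not_and] at hx
    rw [intervalBumpSum_gridBumps, Finset.sum_eq_zero fun i hi => indicator_of_notMem (hx i hi) _]
    exact hg x

lemma tendsto_intervalBumpSum_gridBumps (hg : ∀ x, 0 ≤ g x) (hab : ∀ x ∉ Icc a b, g x = 0)
    (hx : Irrational x) (hgx : ContinuousAt g x) :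
    Tendsto (fun n : ℕ => intervalBumpSum (gridBumps g a b (1 / (n + 1))) x) atTop (𝓝 (g x)) := by
  have hℓ : ∀ n : ℕ, (0 : ℝ) < 1 / (n + 1) := fun n => Nat.one_div_pos_of_nat
  by_cases hxab : x ∈ Icc a b
  swap
  · have h0 : ∀ n : ℕ, intervalBumpSum (gridBumps g a b (1 / (n + 1))) x = 0 := fun n =>
      le_antisymm ((intervalBumpSum_gridBumps_le hg (hℓ n) x).trans_eq (hab x hxab))
        (intervalBumpSum.nonneg (fun _ hp => le_of_mem_gridBumps (hℓ n).le hp) x)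
    simp only [h0, hab x hxab]
    exact tendsto_const_nhds
  set i : ℕ → ℤ := fun n => ⌊x / (1 / (n + 1))⌋
  have hcell : ∀ n : ℕ, x ∈ Ioo ((i n : ℝ) * (1 / (n + 1))) ((i n + 1) * (1 / (n + 1))) :=
    fun n => mem_Ioo_floor_div (hℓ n) (Irrational.ne_int (by
      simpa using hx.mul_natCast (Nat.succ_ne_zero n)))
  have hi : ∀ n : ℕ, i n ∈ Finset.Icc ⌊a / (1 / (n + 1))⌋ ⌊b / (1 / (n + 1))⌋ := fun n =>
    Finset.mem_Icc.2 ⟨Int.floor_mono (div_le_div_of_nonneg_right hxab.1 (hℓ n).le),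
      Int.floor_mono (div_le_div_of_nonneg_right hxab.2 (hℓ n).le)⟩
  have hcells : Tendsto (fun n : ℕ => Icc ((i n : ℝ) * (1 / (n + 1))) ((i n + 1) * (1 / (n + 1))))
      atTop (𝓝 x).smallSets := by
    refine ((tendsto_closedBall_smallSets x).comp
      tendsto_one_div_add_atTop_nhds_zero_nat).smallSets_mono (.of_forall fun n => ?_)
    obtain ⟨h1, h2⟩ := hcell n
    rw [Function.comp_apply, Real.closedBall_eq_Icc]
    exact Icc_subset_Icc (by linarith [add_mul (i n : ℝ) 1 (1 / (n + 1))])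
      (by linarith [add_mul (i n : ℝ) 1 (1 / (n + 1))])
  have hinf := tendsto_csInf_image_of_continuousAt hgx hcells
    (fun n => Ioo_subset_Icc_self (hcell n)) fun n => ⟨0, forall_mem_image.2 fun y _ => hg y⟩
  refine tendsto_of_tendsto_of_tendsto_of_le_of_le
    (by simpa only [sub_zero] using hinf.sub tendsto_one_div_add_atTop_nhds_zero_nat)
    tendsto_const_nhds (fun n => ?_) fun n => intervalBumpSum_gridBumps_le hg (hℓ n) x
  rw [intervalBumpSum_gridBumps_of_mem (hℓ n) (hi n) (hcell n)]
  exact (sub_lt_floor_div_mul _ (hℓ n)).le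

end Grid

/-- By Lebesgue's criterion, these are the nonnegative Riemann integrable functions bounded by `M`
and vanishing outside `[a, b]`. -/
structure NonnegRiemann (g : ℝ → ℝ) (a b M : ℝ) : Prop where
  nonneg : ∀ x, 0 ≤ g x
  le : ∀ x, g x ≤ M
  eq_zero_of_notMem : ∀ x ∉ Icc a b, g x = 0
  ae_continuousAt : ∀ᵐ x, ContinuousAt g x

namespace NonnegRiemann

variable {g : ℝ → ℝ} {a b M : ℝ}

lemma le_indicator (hg : NonnegRiemann g a b M) (x : ℝ) :
    g x ≤ (Icc a b).indicator (fun _ => M) x := by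
  by_cases hx : x ∈ Icc a b
  · simpa [indicator_of_mem hx] using hg.le x
  · simp [indicator_of_notMem hx, hg.eq_zero_of_notMem x hx]

lemma integrable (hg : NonnegRiemann g a b M) : Integrable g :=
  ((integrableOn_const measure_Icc_lt_top.ne).integrable_indicator measurableSet_Icc).mono'
    (aestronglyMeasurable_of_ae_continuousAt hg.ae_continuousAt)
    (ae_of_all _ fun x => (abs_of_nonneg (hg.nonneg x)).trans_le (hg.le_indicator x))

lemma sub_intervalBumpSum (hg : NonnegRiemann g a b M) {B : Multiset (ℝ × ℝ)}
    (hB : ∀ p ∈ B, p.1 ≤ p.2) (hBg : ∀ x, intervalBumpSum B x ≤ g x) :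
    NonnegRiemann (g - intervalBumpSum B) a b M where
  nonneg x := sub_nonneg.2 (hBg x)
  le x := (sub_le_self _ (intervalBumpSum.nonneg hB x)).trans (hg.le x)
  eq_zero_of_notMem x hx := by
    have := hg.eq_zero_of_notMem x hx
    have := hBg x
    have := intervalBumpSum.nonneg hB x
    simp only [Pi.sub_apply]
    linarith
  ae_continuousAt := by
    filter_upwards [hg.ae_continuousAt, intervalBumpSum.ae_continuousAt B] with x using
      ContinuousAt.sub

lemma tendsto_integral_intervalBumpSum_gridBumps (hg : NonnegRiemann g a b M) :
    Tendsto (fun n : ℕ => ∫ x, intervalBumpSum (gridBumps g a b (1 / (n + 1))) x) atTop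
      (𝓝 (∫ x, g x)) := by
  refine tendsto_integral_of_dominated_convergence ((Icc a b).indicator fun _ => M)
    (fun n => (intervalBumpSum.integrable _).aestronglyMeasurable)
    ((integrableOn_const measure_Icc_lt_top.ne).integrable_indicator measurableSet_Icc)
    (fun n => ae_of_all _ fun x => ?_) ?_
  · have hℓ : (0 : ℝ) < 1 / (n + 1) := Nat.one_div_pos_of_nat
    rw [Real.norm_eq_abs, abs_of_nonneg
      (intervalBumpSum.nonneg (fun _ hp => le_of_mem_gridBumps hℓ.le hp) x)]
    exact (intervalBumpSum_gridBumps_le hg.nonneg hℓ x).trans (hg.le_indicator x)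
  · filter_upwards [hg.ae_continuousAt, (countable_range ((↑) : ℚ → ℝ)).ae_notMem volume]
      with x hgx hx
    exact tendsto_intervalBumpSum_gridBumps hg.nonneg hg.eq_zero_of_notMem hx hgx

lemma exists_intervalBumpSum_add_le (hg : NonnegRiemann g a b M) {B : Multiset (ℝ × ℝ)}
    (hB : ∀ p ∈ B, p.1 ≤ p.2) (hBg : ∀ x, intervalBumpSum B x ≤ g x) {ε : ℝ} (hε : 0 < ε) :
    ∃ C : Multiset (ℝ × ℝ), (∀ p ∈ C, p.1 ≤ p.2) ∧ (∀ x, intervalBumpSum (B + C) x ≤ g x) ∧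
      ∫ x, (g x - intervalBumpSum (B + C) x) < ε := by
  have hr := hg.sub_intervalBumpSum hB hBg
  obtain ⟨n, hn⟩ := (hr.tendsto_integral_intervalBumpSum_gridBumps.eventually
    (lt_mem_nhds (sub_lt_self _ hε))).exists
  have hℓ : (0 : ℝ) < 1 / (n + 1) := Nat.one_div_pos_of_nat
  set C := gridBumps (g - intervalBumpSum B) a b (1 / (n + 1))
  have hsplit : ∀ x, g x - intervalBumpSum (B + C) x =
      (g - intervalBumpSum B) x - intervalBumpSum C x := fun x => by
    simp only [map_add, Pi.add_apply, Pi.sub_apply]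
    ring
  refine ⟨C, fun p hp => le_of_mem_gridBumps hℓ.le hp, fun x => ?_, ?_⟩
  · have := intervalBumpSum_gridBumps_le (a := a) (b := b) hr.nonneg hℓ x
    have := hsplit x
    linarith
  · simp_rw [hsplit]
    rw [integral_sub hr.integrable (intervalBumpSum.integrable _)]
    linarith

lemma exists_seq_intervalBump (hg : NonnegRiemann g a b M) :
    ∃ s : ℕ → ℝ × ℝ, (∀ m, (s m).1 ≤ (s m).2) ∧
      (∀ N x, ∑ m ∈ Finset.range N, intervalBump (s m) x ≤ g x) ∧
      ∀ ε > 0, ∃ N, ∫ x, (g x - ∑ m ∈ Finset.range N, intervalBump (s m) x) < ε := by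
  obtain ⟨s, hs⟩ := exists_seq_of_forall_exists_append
    (P := fun B : List (ℝ × ℝ) => (∀ p ∈ B, p.1 ≤ p.2) ∧ ∀ x, intervalBumpSum B x ≤ g x)
    (Q := fun k B => ∫ x, (g x - intervalBumpSum B x) < 1 / (k + 1))
    ⟨fun _ h => (List.not_mem_nil h).elim, hg.nonneg⟩ fun k B ⟨hB, hBg⟩ => by
      obtain ⟨C, hC, hCg, hCε⟩ := hg.exists_intervalBumpSum_add_le
        (fun p hp => hB p (Multiset.mem_coe.1 hp)) hBg Nat.one_div_pos_of_nat
      -- the degenerate interval `(0, 0)` contributes nothing; it only makes the lists grow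
      refine ⟨(0, 0) :: C.toList, List.cons_ne_nil _ _, ⟨fun p hp => ?_, ?_⟩, ?_⟩
      · simp only [List.mem_append, List.mem_cons, Multiset.mem_toList] at hp
        rcases hp with hp | rfl | hp
        exacts [hB p hp, le_rfl, hC p hp]
      · rwa [intervalBumpSum.coe_append_cons_zero]
      · rwa [intervalBumpSum.coe_append_cons_zero]
  have hord : ∀ m, (s m).1 ≤ (s m).2 := fun m => by
    obtain ⟨n, hn, hP, -⟩ := hs m
    exact hP.1 _ (List.mem_map_of_mem (List.mem_range.2 hn))
  refine ⟨s, hord, fun N x => ?_, fun ε hε => ?_⟩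
  · obtain ⟨n, hn, hP, -⟩ := hs N
    calc ∑ m ∈ Finset.range N, intervalBump (s m) x
        ≤ ∑ m ∈ Finset.range n, intervalBump (s m) x :=
          Finset.sum_le_sum_of_subset_of_nonneg (Finset.range_subset_range.2 hn.le)
            fun m _ _ => intervalBump.nonneg (hord m) x
      _ ≤ g x := intervalBumpSum.coe_map_range s n x ▸ hP.2 x
  · obtain ⟨k, hk⟩ := exists_nat_one_div_lt hε
    obtain ⟨n, -, -, hQ⟩ := hs k
    refine ⟨n, lt_of_eq_of_lt ?_ (hQ.trans hk)⟩
    simp_rw [intervalBumpSum.coe_map_range]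

end NonnegRiemann

theorem summable_and_tendsto_integral_abs_sub_sum_intervalBump {η : ℝ → ℝ} (hη : Integrable η)
    {s : ℕ → ℝ × ℝ} (hs : ∀ m, (s m).1 ≤ (s m).2)
    (hle : ∀ N x, ∑ m ∈ Finset.range N, intervalBump (s m) x ≤ η x)
    (hsmall : ∀ ε > 0, ∃ N, ∫ x, (η x - ∑ m ∈ Finset.range N, intervalBump (s m) x) < ε) :
    Summable (fun m => ((s m).2 - (s m).1) ^ 2) ∧
      Tendsto (fun N => ∫ x, |η x - ∑ m ∈ Finset.range N, intervalBump (s m) x|) atTop (𝓝 0) := by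
  have habs : ∀ N, ∫ x, |η x - ∑ m ∈ Finset.range N, intervalBump (s m) x| =
      ∫ x, (η x - ∑ m ∈ Finset.range N, intervalBump (s m) x) := fun N =>
    integral_congr_ae (ae_of_all _ fun x => abs_of_nonneg (sub_nonneg.2 (hle N x)))
  have herr : ∀ N, ∫ x, (η x - ∑ m ∈ Finset.range N, intervalBump (s m) x) =
      (∫ x, η x) - ∑ m ∈ Finset.range N, ((s m).2 - (s m).1) ^ 2 := fun N => by
    rw [integral_sub hη (integrable_finsetSum _ fun m _ => intervalBump.integrable _),
      integral_finsetSum _ fun m _ => intervalBump.integrable _]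
    exact congrArg ((∫ x, η x) - ·)
      (Finset.sum_congr rfl fun m _ => intervalBump.integral_eq (hs m))
  have hnonneg : ∀ N, 0 ≤ ∫ x, (η x - ∑ m ∈ Finset.range N, intervalBump (s m) x) := fun N =>
    integral_nonneg fun x => sub_nonneg.2 (hle N x)
  simp_rw [habs]
  refine ⟨summable_of_sum_range_le (c := ∫ x, η x) (fun m => sq_nonneg _)
      fun N => by linarith [herr N, hnonneg N],
    tendsto_order.2 ⟨fun c hc => .of_forall fun N => hc.trans_le (hnonneg N), fun c hc => ?_⟩⟩
  obtain ⟨N, hN⟩ := hsmall c hc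
  filter_upwards [eventually_ge_atTop N] with n hn
  rw [herr] at hN ⊢
  have := Finset.sum_le_sum_of_subset_of_nonneg (Finset.range_subset_range.2 hn)
    fun m _ _ => sq_nonneg ((s m).2 - (s m).1)
  linarith

end

/-- Every nonnegative Riemann integrable function of compact support (bounded,
compactly supported, a.e. continuous) is an `L¹`-limit of finite sums
`∑ₙ |Iₙ|·χ_{Iₙ}` with `∑ₙ |Iₙ|² < ∞`, where each partial sum lies below `η`. -/
theorem riemann_integrable_sum_of_intervals (η : ℝ → ℝ) (hnonneg : ∀ x, 0 ≤ η x)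
    (hbdd : ∃ M : ℝ, ∀ x, η x ≤ M)
    (hsupp : ∃ K : Set ℝ, IsCompact K ∧ ∀ x ∉ K, η x = 0)
    (hcont : ∀ᵐ x : ℝ ∂volume, ContinuousAt η x) :
    ∃ c d : ℕ → ℝ, (∀ m, c m ≤ d m) ∧
      Summable (fun m => (d m - c m) ^ 2) ∧
      (∀ N : ℕ, ∀ x : ℝ,
        ∑ m ∈ Finset.range N,
          (d m - c m) * (Set.Ioo (c m) (d m)).indicator (fun _ => (1 : ℝ)) x ≤ η x) ∧
      Filter.Tendsto
        (fun N : ℕ => ∫ x : ℝ,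
          |η x - ∑ m ∈ Finset.range N,
            (d m - c m) * (Set.Ioo (c m) (d m)).indicator (fun _ => (1 : ℝ)) x|)
        Filter.atTop (nhds 0) := by
  obtain ⟨M, hM⟩ := hbdd
  obtain ⟨K, hK, hKη⟩ := hsupp
  obtain ⟨a, ha⟩ := hK.bddBelow
  obtain ⟨b, hb⟩ := hK.bddAbove
  have hη : NonnegRiemann η a b M :=
    ⟨hnonneg, hM, fun x hx => hKη x fun hxK => hx ⟨ha hxK, hb hxK⟩, hcont⟩
  obtain ⟨s, hs, hle, hsmall⟩ := hη.exists_seq_intervalBump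
  obtain ⟨hsum, htend⟩ :=
    summable_and_tendsto_integral_abs_sub_sum_intervalBump hη.integrable hs hle hsmall
  exact ⟨fun m => (s m).1, fun m => (s m).2, hs, hsum, hle, htend⟩
end

section
/- (Aronszajn–Krein formula.) Let H be a complex Hilbert space, B a bounded self-adjoint operator on H, φ ∈ H a unit vector, α ∈ ℝ, and let A_α = B + α·P_φ where P_φ is the rank-one operator u ↦ ⟨φ,u⟩·φ. Let z ∈ ℂ with Im z ≠ 0. Then B − zI and A_α − zI are invertible bounded operators, 1 + α·⟨φ, (B−zI)⁻¹φ⟩ ≠ 0, and ⟨φ, (A_α − zI)⁻¹ φ⟩ = ⟨φ, (B−zI)⁻¹φ⟩ / (1 + α·⟨φ, (B−zI)⁻¹φ⟩). -/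
/-!
The resolvents exist because the spectrum of a self-adjoint operator is real, and the perturbation
`α ⟨φ, ·⟩ φ` is self-adjoint. Writing `ψ = (B - z)⁻¹ φ` and `c = ⟨φ, ψ⟩`, one has
`(A_α - z) ψ = (1 + α c) φ`. Injectivity of `A_α - z` forces `1 + α c ≠ 0` (otherwise `ψ = 0`,
hence `φ = 0` and `c = 0`), and then `(A_α - z)⁻¹ φ = (1 + α c)⁻¹ ψ`.
-/

open InnerProductSpace

namespace ContinuousLinearMap

variable {R M : Type*} [Semiring R] [TopologicalSpace M] [AddCommMonoid M] [Module R M]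

theorem ringInverse_apply_apply {T : M →L[R] M} (hT : IsUnit T) (x : M) :
    Ring.inverse T (T x) = x := by
  rw [← mul_apply_eq_comp, Ring.inverse_mul_cancel T hT, one_apply_eq_self]

theorem apply_ringInverse_apply {T : M →L[R] M} (hT : IsUnit T) (x : M) :
    T (Ring.inverse T x) = x := by
  rw [← mul_apply_eq_comp, Ring.mul_inverse_cancel T hT, one_apply_eq_self]

end ContinuousLinearMap

theorem IsSelfAdjoint.isUnit_sub_smul_one {A : Type*} [CStarAlgebra A] {a : A}
    (ha : IsSelfAdjoint a) {z : ℂ} (hz : z.im ≠ 0) : IsUnit (a - z • 1) := by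
  have hz_notMem : z ∉ spectrum ℂ a := fun h ↦ hz (by rw [ha.mem_spectrum_eq_re h]; simp)
  rw [spectrum.notMem_iff, Algebra.algebraMap_eq_smul_one] at hz_notMem
  simpa only [neg_sub] using hz_notMem.neg

section RankOnePerturbation

open ContinuousLinearMap

variable {𝕜 E : Type*} [RCLike 𝕜] [NormedAddCommGroup E] [InnerProductSpace 𝕜 E]
  {N : E →L[𝕜] E} (a : 𝕜) (φ : E)

theorem add_smul_rankOne_apply_ringInverse (hN : IsUnit N) :
    (N + a • rankOne 𝕜 φ φ) (Ring.inverse N φ) = (1 + a * ⟪φ, Ring.inverse N φ⟫_𝕜) • φ := by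
  rw [add_apply, smul_apply, rankOne_apply, apply_ringInverse_apply hN, smul_smul, add_smul,
    one_smul]

theorem one_add_mul_inner_ringInverse_ne_zero (hN : IsUnit N)
    (hM : IsUnit (N + a • rankOne 𝕜 φ φ)) :
    1 + a * ⟪φ, Ring.inverse N φ⟫_𝕜 ≠ 0 := by
  intro h
  have hψ : Ring.inverse N φ = 0 := by
    rw [← ringInverse_apply_apply hM (Ring.inverse N φ),
      add_smul_rankOne_apply_ringInverse a φ hN, h, zero_smul, map_zero]
  have hφ : φ = 0 := by rw [← apply_ringInverse_apply hN φ, hψ, map_zero]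
  simp [hφ] at h

theorem inner_ringInverse_add_smul_rankOne (hN : IsUnit N)
    (hM : IsUnit (N + a • rankOne 𝕜 φ φ)) :
    ⟪φ, Ring.inverse (N + a • rankOne 𝕜 φ φ) φ⟫_𝕜 =
      ⟪φ, Ring.inverse N φ⟫_𝕜 / (1 + a * ⟪φ, Ring.inverse N φ⟫_𝕜) := by
  have hd := one_add_mul_inner_ringInverse_ne_zero a φ hN hM
  have hsol :
      (N + a • rankOne 𝕜 φ φ) ((1 + a * ⟪φ, Ring.inverse N φ⟫_𝕜)⁻¹ • Ring.inverse N φ) = φ := by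
    rw [map_smul, add_smul_rankOne_apply_ringInverse a φ hN, inv_smul_smul₀ hd]
  have hinv := congrArg (fun x ↦ Ring.inverse (N + a • rankOne 𝕜 φ φ) x) hsol
  rw [ringInverse_apply_apply hM] at hinv
  rw [← hinv, inner_smul_right, div_eq_inv_mul]

end RankOnePerturbation

theorem aronszajn_krein_general {H : Type*} [NormedAddCommGroup H] [InnerProductSpace ℂ H]
    [CompleteSpace H] (B : H →L[ℂ] H) (hB : IsSelfAdjoint B)
    (φ : H) (α : ℝ) (z : ℂ) (hz : z.im ≠ 0) :
    IsUnit (B - z • (1 : H →L[ℂ] H)) ∧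
    IsUnit (B + (α : ℂ) • (innerSL ℂ φ).smulRight φ - z • (1 : H →L[ℂ] H)) ∧
    1 + (α : ℂ) * (inner ℂ φ (Ring.inverse (B - z • (1 : H →L[ℂ] H)) φ) : ℂ) ≠ 0 ∧
    (inner ℂ φ
        (Ring.inverse (B + (α : ℂ) • (innerSL ℂ φ).smulRight φ - z • (1 : H →L[ℂ] H)) φ) : ℂ)
      = (inner ℂ φ (Ring.inverse (B - z • (1 : H →L[ℂ] H)) φ) : ℂ) /
          (1 + (α : ℂ) * (inner ℂ φ (Ring.inverse (B - z • (1 : H →L[ℂ] H)) φ) : ℂ)) := by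
  rw [← rankOne_def]
  have hP : IsSelfAdjoint ((α : ℂ) • rankOne ℂ φ φ) :=
    IsSelfAdjoint.smul (Complex.conj_ofReal α)
      (ContinuousLinearMap.isSelfAdjoint_iff_isSymmetric.mpr (isSymmetric_rankOne_self φ))
  have hN := hB.isUnit_sub_smul_one hz
  have hM := (hB.add hP).isUnit_sub_smul_one hz
  rw [add_sub_right_comm] at hM ⊢
  exact ⟨hN, hM, one_add_mul_inner_ringInverse_ne_zero _ φ hN hM,
    inner_ringInverse_add_smul_rankOne _ φ hN hM⟩

/-- **Aronszajn–Krein formula.** For a bounded self-adjoint operator `B`, a unit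
vector `φ`, `α ∈ ℝ`, `A_α = B + α·⟨φ,·⟩φ` and `Im z ≠ 0`: both resolvents exist,
`1 + α⟨φ,(B−z)⁻¹φ⟩ ≠ 0`, and
`⟨φ,(A_α−z)⁻¹φ⟩ = ⟨φ,(B−z)⁻¹φ⟩/(1 + α⟨φ,(B−z)⁻¹φ⟩)`. -/
theorem aronszajn_krein {H : Type*} [NormedAddCommGroup H] [InnerProductSpace ℂ H]
    [CompleteSpace H] (B : H →L[ℂ] H) (hB : IsSelfAdjoint B)
    (φ : H) (hφ : ‖φ‖ = 1) (α : ℝ) (z : ℂ) (hz : z.im ≠ 0) :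
    IsUnit (B - z • (1 : H →L[ℂ] H)) ∧
    IsUnit (B + (α : ℂ) • (innerSL ℂ φ).smulRight φ - z • (1 : H →L[ℂ] H)) ∧
    1 + (α : ℂ) * (inner ℂ φ (Ring.inverse (B - z • (1 : H →L[ℂ] H)) φ) : ℂ) ≠ 0 ∧
    (inner ℂ φ
        (Ring.inverse (B + (α : ℂ) • (innerSL ℂ φ).smulRight φ - z • (1 : H →L[ℂ] H)) φ) : ℂ)
      = (inner ℂ φ (Ring.inverse (B - z • (1 : H →L[ℂ] H)) φ) : ℂ) /
          (1 + (α : ℂ) * (inner ℂ φ (Ring.inverse (B - z • (1 : H →L[ℂ] H)) φ) : ℂ)) :=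
  aronszajn_krein_general B hB φ α z hz
end

section
/- (Perturbation determinant identity, finite-dimensional case.) Let A, B be n×n Hermitian complex matrices, set X = A − B, let φ ∈ ℂⁿ be a unit vector, let P_φ be the rank-one matrix u ↦ ⟨φ,u⟩·φ, and let z ∈ ℂ with Im z ≠ 0. Then det(I − (X + P_φ)·(A − zI)⁻¹) = (1 − ⟨φ, (B − zI)⁻¹ φ⟩) · det(I − X·(A − zI)⁻¹). -/
/-!
Both resolvent factors are invertible because Hermitian matrices have real spectrum. Since
`A - z = (B - z) + X`, one has `I - X (A - z)⁻¹ = (B - z)(A - z)⁻¹`, and likewise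
`I - (X + P_φ)(A - z)⁻¹ = (B - z - P_φ)(A - z)⁻¹`. The rank-one perturbation `B - z - P_φ`
contributes the scalar factor `1 - ⟨φ, (B - z)⁻¹ φ⟩` by the matrix determinant lemma.
-/

open Matrix

namespace Matrix

theorem IsHermitian.isUnit_det_sub_smul_one {𝕜 n : Type*} [RCLike 𝕜] [Fintype n]
    [DecidableEq n] {A : Matrix n n 𝕜} (hA : A.IsHermitian) {z : 𝕜} (hz : RCLike.im z ≠ 0) :
    IsUnit (A - z • 1).det := by
  have hz_notMem : z ∉ spectrum 𝕜 A := by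
    rw [hA.spectrum_eq_image_range]
    rintro ⟨r, -, rfl⟩
    simp at hz
  have hunit : IsUnit (z • 1 - A) := by
    simpa [Algebra.algebraMap_eq_smul_one] using spectrum.notMem_iff.mp hz_notMem
  rw [← isUnit_iff_isUnit_det, ← neg_sub]
  exact hunit.neg

variable {α m : Type*} [CommRing α] [Fintype m] [DecidableEq m]

theorem det_one_sub_vecMulVec (u v : m → α) : (1 - vecMulVec u v).det = 1 - v ⬝ᵥ u := by
  rw [vecMulVec_eq Unit, det_one_sub_mul_comm, det_unique, sub_apply, one_apply_eq,
    replicateRow_mul_replicateCol_apply]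

theorem det_sub_vecMulVec {M : Matrix m m α} (hM : IsUnit M.det) (u v : m → α) :
    (M - vecMulVec u v).det = (1 - v ⬝ᵥ (M⁻¹ *ᵥ u)) * M.det := by
  have hfactor : M - vecMulVec u v = M * (1 - vecMulVec (M⁻¹ *ᵥ u) v) := by
    rw [Matrix.mul_sub, mul_one, mul_vecMulVec, mulVec_mulVec, mul_nonsing_inv _ hM,
      one_mulVec]
  rw [hfactor, det_mul, det_one_sub_vecMulVec, mul_comm]

theorem one_sub_sub_mul_nonsing_inv {A : Matrix m m α} (hA : IsUnit A.det) (B : Matrix m m α) :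
    1 - (A - B) * A⁻¹ = B * A⁻¹ := by
  rw [Matrix.sub_mul, mul_nonsing_inv _ hA, sub_sub_cancel]

theorem det_one_sub_add_vecMulVec_mul_nonsing_inv {A B : Matrix m m α} (hA : IsUnit A.det)
    (hB : IsUnit B.det) (u v : m → α) :
    (1 - (A - B + vecMulVec u v) * A⁻¹).det =
      (1 - v ⬝ᵥ (B⁻¹ *ᵥ u)) * (1 - (A - B) * A⁻¹).det := by
  rw [sub_add, one_sub_sub_mul_nonsing_inv hA, one_sub_sub_mul_nonsing_inv hA,
    det_mul, det_mul, det_sub_vecMulVec hB, mul_assoc]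

end Matrix

theorem perturbation_determinant_identity_finiteDim_general {n : ℕ}
    (A B : Matrix (Fin n) (Fin n) ℂ) (hA : A.IsHermitian) (hB : B.IsHermitian)
    (X : Matrix (Fin n) (Fin n) ℂ) (hX : X = A - B)
    (φ : Fin n → ℂ) (z : ℂ) (hz : z.im ≠ 0) :
    Matrix.det ((1 : Matrix (Fin n) (Fin n) ℂ)
        - (X + Matrix.vecMulVec φ (star φ)) * (A - z • (1 : Matrix (Fin n) (Fin n) ℂ))⁻¹)
      = (1 - star φ ⬝ᵥ ((B - z • (1 : Matrix (Fin n) (Fin n) ℂ))⁻¹ *ᵥ φ)) *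
          Matrix.det ((1 : Matrix (Fin n) (Fin n) ℂ)
            - X * (A - z • (1 : Matrix (Fin n) (Fin n) ℂ))⁻¹) := by
  have hXz : X = (A - z • 1) - (B - z • 1) := by rw [hX, sub_sub_sub_cancel_right]
  rw [hXz]
  exact det_one_sub_add_vecMulVec_mul_nonsing_inv (hA.isUnit_det_sub_smul_one hz)
    (hB.isUnit_det_sub_smul_one hz) φ (star φ)

/-- **Perturbation determinant identity, finite-dimensional case.** For Hermitian
matrices `A`, `B`, `X = A − B`, a unit vector `φ` with `P_φ = ⟨φ,·⟩φ`, and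
`Im z ≠ 0`: `det(I − (X+P_φ)(A−z)⁻¹) = (1 − ⟨φ,(B−z)⁻¹φ⟩)·det(I − X(A−z)⁻¹)`. -/
theorem perturbation_determinant_identity_finiteDim {n : ℕ}
    (A B : Matrix (Fin n) (Fin n) ℂ) (hA : A.IsHermitian) (hB : B.IsHermitian)
    (X : Matrix (Fin n) (Fin n) ℂ) (hX : X = A - B)
    (φ : Fin n → ℂ) (hφ : star φ ⬝ᵥ φ = 1) (z : ℂ) (hz : z.im ≠ 0) :
    Matrix.det ((1 : Matrix (Fin n) (Fin n) ℂ)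
        - (X + Matrix.vecMulVec φ (star φ)) * (A - z • (1 : Matrix (Fin n) (Fin n) ℂ))⁻¹)
      = (1 - star φ ⬝ᵥ ((B - z • (1 : Matrix (Fin n) (Fin n) ℂ))⁻¹ *ᵥ φ)) *
          Matrix.det ((1 : Matrix (Fin n) (Fin n) ℂ)
            - X * (A - z • (1 : Matrix (Fin n) (Fin n) ℂ))⁻¹) :=
  perturbation_determinant_identity_finiteDim_general A B hA hB X hX φ z hz
end
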